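/- Let M be an oriented matroid program of rank r on [n] ∪ {f,g}. Then {[n]∖supp(Y) : Y a nonnegative covector of M∖f} = {[n]∖supp(Y′) : Y′ a nonnegative covector of M∖{f,g}}; that is, the collection of faces of the program is determined by M∖{f,g} alone. -/

import Mathlib

open Set

/-- A *sign vector* on an ambient type `α`. -/
abbrev SignVec (α : Type*) := α → SignType

namespace OMHK

variable {α : Type*}

/-- The support of a sign vector. -/
def supp (X : SignVec α) : Set α := {e | X e ≠ 0}

/-- A sign vector is nonnegative if every entry is `+` or `0`. -/
def Nonneg (X : SignVec α) : Prop := ∀ e, X e = 1 ∨ X e = 0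

/-- Composition of sign vectors: `(X ∘ Y)ₑ = Xₑ` if `Xₑ ≠ 0`, else `Yₑ`. -/
def compose (X Y : SignVec α) : SignVec α := fun e => if X e ≠ 0 then X e else Y e

/-- The separation set `S(X,Y) = {e : Xₑ = -Yₑ ≠ 0}`. -/
def sep (X Y : SignVec α) : Set α := {e | X e = -(Y e) ∧ X e ≠ 0}

/-- Two sign vectors are orthogonal if `S(X,Y)` and `S(X,-Y)` are both empty
or both nonempty. -/
def Orth (X Y : SignVec α) : Prop :=
  (sep X Y = ∅ ∧ sep X (-Y) = ∅) ∨ (sep X Y ≠ ∅ ∧ sep X (-Y) ≠ ∅)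

/-- An oriented matroid with finite ground set inside the ambient type `α`,
presented by its collection of covectors (sign vectors supported on the
ground set), satisfying the covector axioms. -/
structure OrientedMatroid (α : Type*) where
  ground : Set α
  ground_finite : ground.Finite
  covectors : Set (SignVec α)
  supp_subset : ∀ X ∈ covectors, supp X ⊆ ground
  zero_mem : (0 : SignVec α) ∈ covectors
  neg_mem : ∀ X ∈ covectors, -X ∈ covectors
  compose_mem : ∀ X ∈ covectors, ∀ Y ∈ covectors, compose X Y ∈ covectors
  elim : ∀ X ∈ covectors, ∀ Y ∈ covectors, ∀ e ∈ sep X Y,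
    ∃ Z ∈ covectors, Z e = 0 ∧ ∀ e' ∉ sep X Y, Z e' = compose X Y e'

namespace OrientedMatroid

variable (M : OrientedMatroid α)

/-- A cocircuit: a nonzero covector of minimal support. -/
def IsCocircuit (X : SignVec α) : Prop :=
  X ∈ M.covectors ∧ X ≠ 0 ∧
    ∀ Y ∈ M.covectors, Y ≠ 0 → supp Y ⊆ supp X → supp Y = supp X

/-- A vector: a sign vector supported on the ground set and orthogonal to
every covector. -/
def IsVector (X : SignVec α) : Prop :=
  supp X ⊆ M.ground ∧ ∀ Y ∈ M.covectors, Orth X Y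

/-- A circuit: a nonzero vector of minimal support. -/
def IsCircuit (X : SignVec α) : Prop :=
  M.IsVector X ∧ X ≠ 0 ∧
    ∀ Y, M.IsVector Y → Y ≠ 0 → supp Y ⊆ supp X → supp Y = supp X

/-- A set is independent if it is contained in the ground set and contains
the support of no circuit. -/
def Indep (A : Set α) : Prop :=
  A ⊆ M.ground ∧ ∀ X, M.IsCircuit X → ¬ supp X ⊆ A

/-- The rank of a subset: maximal cardinality of an independent subset of it. -/
noncomputable def rk (A : Set α) : ℕ :=
  sSup {k | ∃ I : Set α, I ⊆ A ∧ M.Indep I ∧ I.ncard = k}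

/-- The rank of the oriented matroid. -/
noncomputable def rank : ℕ := M.rk M.ground

end OrientedMatroid

open scoped Classical in
/-- Zero out the coordinates in `A` (the restriction to the complement of `A`,
in ambient terms). -/
noncomputable def restrictAway (A : Set α) (X : SignVec α) : SignVec α :=
  fun e => if e ∈ A then 0 else X e

/-- `M'` is the deletion `M ∖ A`: its ground set is `M.ground ∖ A` and its
circuits are the circuits of `M` vanishing on `A`. -/
def IsDeletion (M : OrientedMatroid α) (A : Set α) (M' : OrientedMatroid α) : Prop :=
  M'.ground = M.ground \ A ∧
  ∀ X, M'.IsCircuit X ↔ (M.IsCircuit X ∧ ∀ e ∈ A, X e = 0)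

/-- `M'` is the contraction `M / A`: its ground set is `M.ground ∖ A` and its
circuits are the nonzero minimal-support members of the restrictions away from
`A` of circuits of `M`. -/
def IsContraction (M : OrientedMatroid α) (A : Set α) (M' : OrientedMatroid α) : Prop :=
  M'.ground = M.ground \ A ∧
  ∀ X, M'.IsCircuit X ↔
    (X ≠ 0 ∧ (∃ Y, M.IsCircuit Y ∧ X = restrictAway A Y) ∧
      ∀ Z : SignVec α, Z ≠ 0 → (∃ Y, M.IsCircuit Y ∧ Z = restrictAway A Y) →
        supp Z ⊆ supp X → supp Z = supp X)

/-- `Nh` is an extension of `N` by the new element `h` (same rank). -/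
def IsExtension (N : OrientedMatroid α) (h : α) (Nh : OrientedMatroid α) : Prop :=
  h ∉ N.ground ∧ Nh.ground = insert h N.ground ∧ Nh.rank = N.rank ∧
    IsDeletion Nh {h} N

/-- The element `h` is in general position in `Nh`: every circuit whose support
contains `h` has support of cardinality `rank + 1`. -/
def GenPos (Nh : OrientedMatroid α) (h : α) : Prop :=
  ∀ X, Nh.IsCircuit X → X h ≠ 0 → (supp X).ncard = Nh.rank + 1

/-- A directed path from `a` to `b` in the digraph with arc relation `A`. -/
def IsDipath {V : Type*} (A : V → V → Prop) (p : List V) (a b : V) : Prop :=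
  p ≠ [] ∧ p.head? = some a ∧ p.getLast? = some b ∧ p.Chain' A ∧ p.Nodup

/-! ### Oriented matroid programs.
We fix the ambient type `ℕ`; the ground set of a program is `[n] ∪ {f, g}`
where `[n] = {0, …, n-1}`, the objective element is `f = n` and the right hand
side element is `g = n + 1`.  Extensions use the fresh element `h = n + 2`. -/

/-- `[n] = {0, …, n - 1}`. -/
def nset (n : ℕ) : Set ℕ := {k | k < n}

/-- `M` is an oriented matroid program of rank `r` on `[n] ∪ {f, g}`
(`f = n`, `g = n + 1`), where `Mf` denotes the deletion `M ∖ f`: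
(i) every nonnegative cocircuit of `M ∖ f` has `g` in its support;
(ii) for every `e ∈ [n]` there is a nonnegative cocircuit `Y` of `M ∖ f`
with `Y e = +`; (iii) every circuit of `M` whose support contains `f` has
support of cardinality `r + 1`. -/
def IsProgram (M Mf : OrientedMatroid ℕ) (n r : ℕ) : Prop :=
  M.ground = nset n ∪ {n, n + 1} ∧ M.rank = r ∧ IsDeletion M {n} Mf ∧
  (∀ Y, Mf.IsCocircuit Y → Nonneg Y → Y (n + 1) ≠ 0) ∧
  (∀ e, e < n → ∃ Y, Mf.IsCocircuit Y ∧ Nonneg Y ∧ Y e = 1) ∧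
  (∀ X, M.IsCircuit X → X n ≠ 0 → (supp X).ncard = r + 1)

/-- A node of the program: `[n] ∖ supp Y` for `Y` a nonnegative cocircuit of
`M ∖ f`. -/
def IsNode (Mf : OrientedMatroid ℕ) (n : ℕ) (v : Set ℕ) : Prop :=
  ∃ Y, Mf.IsCocircuit Y ∧ Nonneg Y ∧ v = nset n \ supp Y

/-- The arc relation of the digraph `K_f`: `v → v'` when `v, v'` are adjacent
nodes and the witnessing cocircuit `Y''` of `M` (zero at `g`, positive on
`v' ∖ v`, negative on `v ∖ v'`, zero on `v ∩ v'`, nonzero at `f`) satisfies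
`Y'' f = Y'' e` for `e ∈ v ∖ v'`. -/
def Arc (M Mf : OrientedMatroid ℕ) (n r : ℕ) (v v' : Set ℕ) : Prop :=
  IsNode Mf n v ∧ IsNode Mf n v' ∧ v ≠ v' ∧ M.rk (v ∩ v') = r - 2 ∧
  ∃ Y, M.IsCocircuit Y ∧ Y (n + 1) = 0 ∧
    (∀ e ∈ v' \ v, Y e = 1) ∧ (∀ e ∈ v \ v', Y e = -1) ∧
    (∀ e ∈ v ∩ v', Y e = 0) ∧ Y n ≠ 0 ∧ (∀ e ∈ v \ v', Y n = Y e)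

/-- The source of `K_f`: the node with no incoming arcs. -/
def IsSource (M Mf : OrientedMatroid ℕ) (n r : ℕ) (v : Set ℕ) : Prop :=
  IsNode Mf n v ∧ ∀ u, ¬ Arc M Mf n r u v

/-- The sink of `K_f`: the node with no outgoing arcs. -/
def IsSink (M Mf : OrientedMatroid ℕ) (n r : ℕ) (v : Set ℕ) : Prop :=
  IsNode Mf n v ∧ ∀ u, ¬ Arc M Mf n r v u

/-- The arc relation of the digraph `K_h` determined by an extension `M̂` of
`M/g` by `h = n + 2` in general position; `Mhf` denotes `M̂ ∖ f`. -/
def ArcH (M Mf Mhf : OrientedMatroid ℕ) (n r : ℕ) (v v' : Set ℕ) : Prop :=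
  IsNode Mf n v ∧ IsNode Mf n v' ∧ v ≠ v' ∧ M.rk (v ∩ v') = r - 2 ∧
  ∃ Y, Mhf.IsCocircuit Y ∧
    (∀ e ∈ v' \ v, Y e = 1) ∧ (∀ e ∈ v \ v', Y e = -1) ∧
    (∀ e ∈ v ∩ v', Y e = 0) ∧ Y (n + 2) ≠ 0 ∧ (∀ e ∈ v \ v', Y (n + 2) = Y e)

/-- `x` is a vertex of the subdigraph `K_{[f,-h]}`: there is a vector `X` of
`M̂` with `X₊ = x ∪ {h}` and `X₋ = {f}`. -/
def InKfmh (Mhat : OrientedMatroid ℕ) (n : ℕ) (x : Set ℕ) : Prop :=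
  ∃ X, Mhat.IsVector X ∧ {e | X e = 1} = x ∪ {n + 2} ∧ {e | X e = -1} = {n}

/-- `x` is a vertex of the subdigraph `K_{[-h,-f]}`: there is a vector `X` of
`M̂` with `X₊ = x ∪ {f, h}` and `X₋ = ∅`. -/
def InKmhmf (Mhat : OrientedMatroid ℕ) (n : ℕ) (x : Set ℕ) : Prop :=
  ∃ X, Mhat.IsVector X ∧ {e | X e = 1} = x ∪ {n, n + 2} ∧ {e | X e = -1} = (∅ : Set ℕ)

end OMHK
namespace OMHK

open OrientedMatroid

/-! ### Auxiliary theory: sign vector basics -/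

section Aux

@[simp] lemma zero_apply (e : ℕ) : (0 : SignVec ℕ) e = 0 := rfl
@[simp] lemma neg_apply (X : SignVec ℕ) (e : ℕ) : (-X) e = -(X e) := rfl

lemma mem_supp {X : SignVec ℕ} {e : ℕ} : e ∈ supp X ↔ X e ≠ 0 := Iff.rfl
lemma mem_sep {X Y : SignVec ℕ} {e : ℕ} : e ∈ sep X Y ↔ X e = -(Y e) ∧ X e ≠ 0 := Iff.rfl

/-- The agreement set. -/
def agr (X Y : SignVec ℕ) : Set ℕ := {e | X e = Y e ∧ X e ≠ 0}

lemma mem_agr {X Y : SignVec ℕ} {e : ℕ} : e ∈ agr X Y ↔ X e = Y e ∧ X e ≠ 0 := Iff.rfl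

lemma sep_neg (X Y : SignVec ℕ) : sep X (-Y) = agr X Y := by
  ext e; simp only [mem_sep, mem_agr, neg_apply, neg_neg]

lemma sep_neg_neg (X Y : SignVec ℕ) : sep X (- -Y) = sep X Y := by rw [neg_neg]

lemma ne_zero_iff_supp {X : SignVec ℕ} : X ≠ 0 ↔ (supp X).Nonempty := by
  constructor
  · intro h
    by_contra hs
    apply h; funext e
    have : e ∉ supp X := fun he => hs ⟨e, he⟩
    simpa [mem_supp, not_not] using this
  · rintro ⟨e, he⟩ h; rw [h] at he; exact he rfl

lemma orth_iff {X Y : SignVec ℕ} : Orth X Y ↔ ((sep X Y).Nonempty ↔ (agr X Y).Nonempty) := by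
  unfold Orth
  rw [sep_neg]
  constructor
  · rintro (⟨h1, h2⟩ | ⟨h1, h2⟩)
    · simp [h1, h2]
    · rw [Set.nonempty_iff_ne_empty, Set.nonempty_iff_ne_empty]; simp [h1, h2]
  · intro h
    rcases (sep X Y).eq_empty_or_nonempty with h1 | h1
    · left
      refine ⟨h1, ?_⟩
      rw [← Set.not_nonempty_iff_eq_empty] at h1 ⊢
      exact fun ha => h1 (h.2 ha)
    · right
      rw [Set.nonempty_iff_ne_empty] at h1
      refine ⟨h1, ?_⟩
      rw [← Set.nonempty_iff_ne_empty]
      rw [← Set.nonempty_iff_ne_empty] at h1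
      exact h.1 h1

lemma sep_symm (X Y : SignVec ℕ) : sep X Y = sep Y X := by
  ext e
  simp only [mem_sep]
  constructor <;> rintro ⟨h1, h2⟩
  · refine ⟨by rw [h1] at *; exact (neg_neg _).symm, fun h => by simp [h] at h1; exact h2 h1⟩
  · refine ⟨by rw [h1] at *; exact (neg_neg _).symm, fun h => by simp [h] at h1; exact h2 h1⟩

lemma agr_symm (X Y : SignVec ℕ) : agr X Y = agr Y X := by
  ext e
  simp only [mem_agr]
  constructor <;> rintro ⟨h1, h2⟩
  · exact ⟨h1.symm, h1 ▸ h2⟩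
  · exact ⟨h1.symm, h1 ▸ h2⟩

lemma orth_symm {X Y : SignVec ℕ} (h : Orth X Y) : Orth Y X := by
  rw [orth_iff] at h ⊢; rw [sep_symm, agr_symm]; exact h

lemma orth_neg_right {X Y : SignVec ℕ} (h : Orth X Y) : Orth X (-Y) := by
  rw [orth_iff] at h ⊢
  rw [sep_neg, show agr X (-Y) = sep X Y by rw [← sep_neg_neg X Y, sep_neg]]
  exact h.symm

lemma orth_zero (X : SignVec ℕ) : Orth X 0 := by
  rw [orth_iff]
  have h1 : sep X 0 = ∅ := by ext e; simp [mem_sep]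
  have h2 : agr X 0 = ∅ := by ext e; simp only [mem_agr, zero_apply, Set.mem_empty_iff_false, iff_false]; tauto
  simp [h1, h2]

lemma zero_orth (Y : SignVec ℕ) : Orth 0 Y := by
  rw [orth_iff]
  have h1 : sep 0 Y = ∅ := by ext e; simp [mem_sep]
  have h2 : agr 0 Y = ∅ := by ext e; simp [mem_agr]
  simp [h1, h2]

lemma orth_neg_left {X Y : SignVec ℕ} (h : Orth X Y) : Orth (-X) Y :=
  orth_symm (orth_neg_right (orth_symm h))

-- sign facts
lemma sign_eq_or_opp {s t : SignType} (hs : s ≠ 0) (ht : t ≠ 0) : s = t ∨ s = -t := by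
  cases s <;> cases t <;> simp_all

lemma compose_left {X Y : SignVec ℕ} {e : ℕ} (h : X e ≠ 0) : compose X Y e = X e := by
  simp [compose, h]

lemma compose_right {X Y : SignVec ℕ} {e : ℕ} (h : X e = 0) : compose X Y e = Y e := by
  simp [compose, h]

lemma supp_compose (X Y : SignVec ℕ) : supp (compose X Y) = supp X ∪ supp Y := by
  ext e
  by_cases h : X e = 0 <;> simp [mem_supp, compose, h]

lemma compose_mem_cases {X Y : SignVec ℕ} (e : ℕ) :
    compose X Y e = X e ∨ (X e = 0 ∧ compose X Y e = Y e) := by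
  by_cases h : X e = 0
  · exact Or.inr ⟨h, compose_right h⟩
  · exact Or.inl (compose_left h)

end Aux

/-! ### Covector families and their vectors -/

section Fam

/-- A covector family on ground set `E` (the covector axioms, abstractly). -/
structure Fam (E : Set ℕ) (V : Set (SignVec ℕ)) : Prop where
  fin : E.Finite
  supp_sub : ∀ X ∈ V, supp X ⊆ E
  zero : (0 : SignVec ℕ) ∈ V
  neg : ∀ X ∈ V, -X ∈ V
  comp : ∀ X ∈ V, ∀ Y ∈ V, compose X Y ∈ V
  elim : ∀ X ∈ V, ∀ Y ∈ V, ∀ e ∈ sep X Y,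
    ∃ Z ∈ V, Z e = 0 ∧ ∀ e' ∉ sep X Y, Z e' = compose X Y e'

/-- The vectors of a family: sign vectors supported on `E` orthogonal to all members. -/
def vect (E : Set ℕ) (V : Set (SignVec ℕ)) : Set (SignVec ℕ) :=
  {X | supp X ⊆ E ∧ ∀ Y ∈ V, Orth X Y}

/-- Minimal-support nonzero members of a collection. -/
def minIn (W : Set (SignVec ℕ)) (U : SignVec ℕ) : Prop :=
  U ∈ W ∧ U ≠ 0 ∧ ∀ Y ∈ W, Y ≠ 0 → supp Y ⊆ supp U → supp Y = supp U

lemma famOf (M : OrientedMatroid ℕ) : Fam M.ground M.covectors :=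
  ⟨M.ground_finite, M.supp_subset, M.zero_mem, M.neg_mem, M.compose_mem, M.elim⟩

lemma isVector_iff (M : OrientedMatroid ℕ) (X : SignVec ℕ) :
    M.IsVector X ↔ X ∈ vect M.ground M.covectors := Iff.rfl

lemma isCircuit_iff (M : OrientedMatroid ℕ) (X : SignVec ℕ) :
    M.IsCircuit X ↔ minIn (vect M.ground M.covectors) X := Iff.rfl

/-- Generic descent principle. -/
lemma exists_good_of_descent {β : Type*} {P Good : β → Prop} (μ : β → ℕ)
    (h : ∀ W, P W → Good W ∨ ∃ W', P W' ∧ μ W' < μ W) :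
    ∀ W, P W → ∃ U, P U ∧ Good U := by
  intro W hW
  obtain ⟨k, hk⟩ : ∃ k, μ W ≤ k := ⟨μ W, le_rfl⟩
  induction k generalizing W with
  | zero =>
    rcases h W hW with hg | ⟨W', hW', hl⟩
    · exact ⟨W, hW, hg⟩
    · omega
  | succ k IH =>
    rcases h W hW with hg | ⟨W', hW', hl⟩
    · exact ⟨W, hW, hg⟩
    · exact IH W' hW' (by omega)

lemma supp_finite {E : Set ℕ} {W : Set (SignVec ℕ)} (hfin : E.Finite)
    (hsupp : ∀ X ∈ W, supp X ⊆ E) {X : SignVec ℕ} (hX : X ∈ W) : (supp X).Finite :=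
  hfin.subset (hsupp X hX)

/-- Below every nonzero member of a supp-bounded collection there is a minimal one. -/
lemma exists_minIn_below {E : Set ℕ} {W : Set (SignVec ℕ)} (hfin : E.Finite)
    (hsupp : ∀ X ∈ W, supp X ⊆ E) {X : SignVec ℕ} (hX : X ∈ W) (hne : X ≠ 0) :
    ∃ U, supp U ⊆ supp X ∧ minIn W U := by
  have key := exists_good_of_descent (P := fun Y => Y ∈ W ∧ Y ≠ 0 ∧ supp Y ⊆ supp X)
    (Good := fun Y => minIn W Y) (fun Y => (supp Y).ncard) ?_ X ⟨hX, hne, subset_rfl⟩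
  · obtain ⟨U, ⟨hU1, hU2, hU3⟩, hUg⟩ := key
    exact ⟨U, hU3, hUg⟩
  · rintro Y ⟨hY, hYne, hYsub⟩
    by_cases hmin : ∀ Z ∈ W, Z ≠ 0 → supp Z ⊆ supp Y → supp Z = supp Y
    · exact Or.inl ⟨hY, hYne, hmin⟩
    · push_neg at hmin
      obtain ⟨Z, hZ, hZne, hZsub, hZneq⟩ := hmin
      refine Or.inr ⟨Z, ⟨hZ, hZne, hZsub.trans hYsub⟩, ?_⟩
      exact Set.ncard_lt_ncard (ssubset_of_subset_of_ne hZsub hZneq)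
        (supp_finite hfin hsupp hY)

/-- Key auxiliary step for composition-closure of vectors. -/
lemma vect_compose_aux {X X' W : SignVec ℕ} (hX : Orth X W) (hX' : Orth X' W)
    (hsep : sep (compose X X') W = ∅) : agr (compose X X') W = ∅ := by
  have hsepX : sep X W = ∅ := by
    rw [Set.eq_empty_iff_forall_notMem] at hsep ⊢
    intro e ⟨h1, h2⟩
    exact hsep e ⟨by rw [compose_left h2]; exact h1, by rw [compose_left h2]; exact h2⟩
  have hagrX : agr X W = ∅ := by
    rw [orth_iff] at hX
    rw [← Set.not_nonempty_iff_eq_empty] at hsepX ⊢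
    exact fun h => hsepX (hX.2 h)
  -- supp X ∩ supp W = ∅
  have hdisj : ∀ e, X e ≠ 0 → W e = 0 := by
    intro e he
    by_contra hW
    rcases sign_eq_or_opp he hW with h | h
    · exact (Set.eq_empty_iff_forall_notMem.mp hagrX e) ⟨h, he⟩
    · exact (Set.eq_empty_iff_forall_notMem.mp hsepX e) ⟨h, he⟩
  have hsepX' : sep X' W = ∅ := by
    rw [Set.eq_empty_iff_forall_notMem] at hsep ⊢
    intro e ⟨h1, h2⟩
    have hWe : W e ≠ 0 := by
      intro h; rw [h] at h1; simp at h1; exact h2 h1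
    have hXe : X e = 0 := by
      by_contra hX0; exact hWe (hdisj e hX0)
    exact hsep e ⟨by rw [compose_right hXe]; exact h1, by rw [compose_right hXe]; exact h2⟩
  have hagrX' : agr X' W = ∅ := by
    rw [orth_iff] at hX'
    rw [← Set.not_nonempty_iff_eq_empty] at hsepX' ⊢
    exact fun h => hsepX' (hX'.2 h)
  have hdisj' : ∀ e, X' e ≠ 0 → W e = 0 := by
    intro e he
    by_contra hW
    rcases sign_eq_or_opp he hW with h | h
    · exact (Set.eq_empty_iff_forall_notMem.mp hagrX' e) ⟨h, he⟩
    · exact (Set.eq_empty_iff_forall_notMem.mp hsepX' e) ⟨h, he⟩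
  rw [Set.eq_empty_iff_forall_notMem]
  intro e ⟨h1, h2⟩
  have hWe : W e ≠ 0 := fun h => h2 (h ▸ h1)
  rcases compose_mem_cases (X := X) (Y := X') e with hc | ⟨hX0, hc⟩
  · rw [hc] at h1 h2; exact hWe (hdisj e h2)
  · rw [hc] at h1 h2; exact hWe (hdisj' e h2)

lemma agr_neg (X Y : SignVec ℕ) : agr X (-Y) = sep X Y := by
  rw [← sep_neg_neg X Y, sep_neg]

/-- Vectors are closed under composition. -/
lemma vect_compose {E : Set ℕ} {V : Set (SignVec ℕ)} {X X' : SignVec ℕ}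
    (hX : X ∈ vect E V) (hX' : X' ∈ vect E V) : compose X X' ∈ vect E V := by
  refine ⟨by rw [supp_compose]; exact Set.union_subset hX.1 hX'.1, ?_⟩
  intro W hW
  rw [orth_iff]
  constructor
  · intro h
    by_contra ha
    rw [Set.not_nonempty_iff_eq_empty] at ha
    have := vect_compose_aux (orth_neg_right (hX.2 W hW)) (orth_neg_right (hX'.2 W hW))
      (by rw [sep_neg]; exact ha)
    rw [agr_neg] at this
    rw [Set.nonempty_iff_ne_empty] at h
    exact h this
  · intro h
    by_contra hs
    rw [Set.not_nonempty_iff_eq_empty] at hs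
    have := vect_compose_aux (hX.2 W hW) (hX'.2 W hW) hs
    rw [Set.nonempty_iff_ne_empty] at h
    exact h this

lemma vect_zero (E : Set ℕ) (V : Set (SignVec ℕ)) : (0 : SignVec ℕ) ∈ vect E V := by
  refine ⟨?_, fun Y hY => zero_orth Y⟩
  intro e he; simp [mem_supp] at he

lemma vect_neg {E : Set ℕ} {V : Set (SignVec ℕ)} {X : SignVec ℕ}
    (hX : X ∈ vect E V) : -X ∈ vect E V := by
  refine ⟨?_, fun Y hY => orth_neg_left (hX.2 Y hY)⟩
  intro e he
  apply hX.1
  simp only [mem_supp, neg_apply] at he ⊢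
  intro h; rw [h] at he; exact he rfl

end Fam

/-! ### Vector lifting across a contraction -/

section VL

variable {E : Set ℕ} {V : Set (SignVec ℕ)}

/-- Update one coordinate of a sign vector. -/
def updSV (X : SignVec ℕ) (e : ℕ) (s : SignType) : SignVec ℕ :=
  fun d => if d = e then s else X d

@[simp] lemma updSV_self (X : SignVec ℕ) (e : ℕ) (s : SignType) : updSV X e s e = s := by
  simp [updSV]

lemma updSV_ne (X : SignVec ℕ) {e d : ℕ} (s : SignType) (h : d ≠ e) : updSV X e s d = X d := by
  simp [updSV, h]

lemma sign_neg_eq_zero {s : SignType} : -s = 0 ↔ s = 0 := by cases s <;> simp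

lemma sign_neg_ne_self {s : SignType} (h : s ≠ 0) : -s ≠ s := by cases s <;> simp_all

/-- Membership characterization of `sep` after an update. -/
lemma sep_updSV_nonempty {Z' W : SignVec ℕ} {e : ℕ} (hze : Z' e = 0) (σ : SignType) :
    (sep (updSV Z' e σ) W).Nonempty ↔ (sep Z' W).Nonempty ∨ (σ = -(W e) ∧ σ ≠ 0) := by
  constructor
  · rintro ⟨d, hd1, hd2⟩
    by_cases h : d = e
    · subst h; rw [updSV_self] at hd1 hd2; exact Or.inr ⟨hd1, hd2⟩
    · rw [updSV_ne _ _ h] at hd1 hd2; exact Or.inl ⟨d, hd1, hd2⟩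
  · rintro (⟨d, hd1, hd2⟩ | ⟨h1, h2⟩)
    · have hd : d ≠ e := fun h => hd2 (h ▸ hze)
      exact ⟨d, by rw [updSV_ne _ _ hd]; exact hd1, by rw [updSV_ne _ _ hd]; exact hd2⟩
    · exact ⟨e, by rw [updSV_self]; exact h1, by rw [updSV_self]; exact h2⟩

lemma agr_updSV_nonempty {Z' W : SignVec ℕ} {e : ℕ} (hze : Z' e = 0) (σ : SignType) :
    (agr (updSV Z' e σ) W).Nonempty ↔ (agr Z' W).Nonempty ∨ (σ = W e ∧ σ ≠ 0) := by
  constructor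
  · rintro ⟨d, hd1, hd2⟩
    by_cases h : d = e
    · subst h; rw [updSV_self] at hd1 hd2; exact Or.inr ⟨hd1, hd2⟩
    · rw [updSV_ne _ _ h] at hd1 hd2; exact Or.inl ⟨d, hd1, hd2⟩
  · rintro (⟨d, hd1, hd2⟩ | ⟨h1, h2⟩)
    · have hd : d ≠ e := fun h => hd2 (h ▸ hze)
      exact ⟨d, by rw [updSV_ne _ _ hd]; exact hd1, by rw [updSV_ne _ _ hd]; exact hd2⟩
    · exact ⟨e, by rw [updSV_self]; exact h1, by rw [updSV_self]; exact h2⟩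

/-- From emptiness of both `sep` and `agr`, supports are disjoint. -/
lemma disj_of_sep_agr_empty {Z' V₀ : SignVec ℕ} (hs : sep Z' V₀ = ∅) (ha : agr Z' V₀ = ∅) :
    ∀ d, Z' d ≠ 0 → V₀ d = 0 := by
  intro d hd
  by_contra hv
  rcases sign_eq_or_opp hd hv with h | h
  · exact (Set.eq_empty_iff_forall_notMem.mp ha d) ⟨h, hd⟩
  · exact (Set.eq_empty_iff_forall_notMem.mp hs d) ⟨h, hd⟩

/-- If `Z'` never opposes `V₀`, then on `supp Z'` the vector `V₀` conforms to `Z'`. -/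
lemma conf_of_sep_empty {Z' V₀ : SignVec ℕ} (hs : sep Z' V₀ = ∅) :
    ∀ d, Z' d ≠ 0 → V₀ d = 0 ∨ V₀ d = Z' d := by
  intro d hd
  by_cases hv : V₀ d = 0
  · exact Or.inl hv
  rcases sign_eq_or_opp hd hv with h | h
  · exact Or.inr h.symm
  · exact absurd ⟨h, hd⟩ (Set.eq_empty_iff_forall_notMem.mp hs d)

/-- Uniqueness of forced values: disjoint-type vs agreement-type is contradictory. -/
lemma VL_case_disj_agr (hV : Fam E V) {Z' : SignVec ℕ} {e : ℕ}
    (hze : Z' e = 0) (horth : ∀ W ∈ V, W e = 0 → Orth Z' W)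
    {V₁ V₂ : SignVec ℕ} (h1 : V₁ ∈ V) (h2 : V₂ ∈ V)
    (h1e : V₁ e ≠ 0) (h2e : V₂ e ≠ 0)
    (hs1 : sep Z' V₁ = ∅) (ha1 : agr Z' V₁ = ∅)
    (hs2 : sep Z' V₂ = ∅) (ha2 : agr Z' V₂ ≠ ∅) : False := by
  -- choose W₁ = ±V₁ with W₁ e = -(V₂ e)
  obtain ⟨W₁, hW₁V, hW₁e, hW₁disj⟩ :
      ∃ W₁, W₁ ∈ V ∧ W₁ e = -(V₂ e) ∧ ∀ d, Z' d ≠ 0 → W₁ d = 0 := by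
    rcases sign_eq_or_opp h1e h2e with h | h
    · exact ⟨-V₁, hV.neg V₁ h1, by rw [neg_apply, h], fun d hd => by
        rw [neg_apply, disj_of_sep_agr_empty hs1 ha1 d hd]; rfl⟩
    · exact ⟨V₁, h1, h, disj_of_sep_agr_empty hs1 ha1⟩
  have hesep : e ∈ sep V₂ W₁ := ⟨by rw [hW₁e, neg_neg], h2e⟩
  obtain ⟨Z₃, hZ₃V, hZ₃e, hZ₃⟩ := hV.elim V₂ h2 W₁ hW₁V e hesep
  -- On supp Z', Z₃ agrees with V₂
  have hkey : ∀ d, Z' d ≠ 0 → Z₃ d = V₂ d := by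
    intro d hd
    have hW₁d : W₁ d = 0 := hW₁disj d hd
    have hdsep : d ∉ sep V₂ W₁ := by
      rintro ⟨hx, hy⟩; rw [hW₁d] at hx; simp at hx; exact hy hx
    rw [hZ₃ d hdsep]
    rcases compose_mem_cases (X := V₂) (Y := W₁) d with hc | ⟨hc0, hc⟩
    · exact hc
    · rw [hc, hW₁d, hc0]
  have horthZ₃ := horth Z₃ hZ₃V hZ₃e
  rw [orth_iff] at horthZ₃
  have hsepZ₃ : ¬(sep Z' Z₃).Nonempty := by
    rintro ⟨d, hd1, hd2⟩
    rw [hkey d hd2] at hd1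
    exact (Set.eq_empty_iff_forall_notMem.mp hs2 d) ⟨hd1, hd2⟩
  apply hsepZ₃
  apply horthZ₃.2
  obtain ⟨d, hd1, hd2⟩ := Set.nonempty_iff_ne_empty.mpr ha2
  exact ⟨d, by rw [hkey d hd2]; exact hd1, hd2⟩

/-- Uniqueness of forced values: two agreement-types force the same sign. -/
lemma VL_case_agr_agr (hV : Fam E V) {Z' : SignVec ℕ} {e : ℕ}
    (hze : Z' e = 0) (horth : ∀ W ∈ V, W e = 0 → Orth Z' W)
    {V₁ V₂ : SignVec ℕ} (h1 : V₁ ∈ V) (h2 : V₂ ∈ V)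
    (h1e : V₁ e ≠ 0) (h2e : V₂ e ≠ 0)
    (hs1 : sep Z' V₁ = ∅) (ha1 : agr Z' V₁ ≠ ∅)
    (hs2 : sep Z' V₂ = ∅) (hne : V₁ e = -(V₂ e)) : False := by
  have hesep : e ∈ sep V₁ V₂ := ⟨hne, h1e⟩
  obtain ⟨Z₃, hZ₃V, hZ₃e, hZ₃⟩ := hV.elim V₁ h1 V₂ h2 e hesep
  have hkey : ∀ d, Z' d ≠ 0 → Z₃ d = 0 ∨ Z₃ d = Z' d := by
    intro d hd
    have hc1 := conf_of_sep_empty hs1 d hd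
    have hc2 := conf_of_sep_empty hs2 d hd
    have hdsep : d ∉ sep V₁ V₂ := by
      rintro ⟨hx, hy⟩
      rcases hc1 with hc1 | hc1
      · exact hy hc1
      rcases hc2 with hc2 | hc2
      · rw [hc2] at hx; simp at hx; exact hy hx
      · rw [hc1, hc2] at hx; exact sign_neg_ne_self hd hx.symm
    rw [hZ₃ d hdsep]
    rcases compose_mem_cases (X := V₁) (Y := V₂) d with hc | ⟨hc0, hc⟩
    · rw [hc]; exact hc1
    · rw [hc]; exact hc2
  have horthZ₃ := horth Z₃ hZ₃V hZ₃e
  rw [orth_iff] at horthZ₃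
  have hsepZ₃ : ¬(sep Z' Z₃).Nonempty := by
    rintro ⟨d, hd1, hd2⟩
    rcases hkey d hd2 with h | h
    · rw [h] at hd1; simp at hd1; exact hd2 hd1
    · rw [h] at hd1; exact sign_neg_ne_self hd2 hd1.symm
  apply hsepZ₃
  apply horthZ₃.2
  obtain ⟨d, hd1, hd2⟩ := Set.nonempty_iff_ne_empty.mpr ha1
  have hV₁d : V₁ d ≠ 0 := by rw [← hd1]; exact hd2
  have hdsep : d ∉ sep V₁ V₂ := by
    rintro ⟨hx, hy⟩
    rcases conf_of_sep_empty hs2 d hd2 with hc2 | hc2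
    · rw [hc2] at hx; simp at hx; exact hy hx
    · rw [hc2, hd1] at hx
      exact sign_neg_ne_self hV₁d hx.symm
  refine ⟨d, ?_, hd2⟩
  rw [hZ₃ d hdsep, compose_left hV₁d, ← hd1]

end VL

section VLmain

variable {E : Set ℕ} {V : Set (SignVec ℕ)}

open scoped Classical

/-- The candidate forced value at `e` determined by a member `V₀`. -/
noncomputable def VLval (Z' : SignVec ℕ) (e : ℕ) (V₀ : SignVec ℕ) : SignType :=
  if sep Z' V₀ = ∅ then (if agr Z' V₀ = ∅ then 0 else -(V₀ e)) else V₀ e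

lemma VLval_norm {Z' : SignVec ℕ} {e : ℕ} {V₀ : SignVec ℕ} (hV : Fam E V)
    (h0 : V₀ ∈ V) (h0e : V₀ e ≠ 0) (h0f : sep Z' V₀ = ∅ ∨ agr Z' V₀ = ∅) :
    ∃ W, (W ∈ V ∧ W e ≠ 0 ∧ sep Z' W = ∅) ∧
      VLval Z' e V₀ = (if agr Z' W = ∅ then 0 else -(W e)) := by
  by_cases hs : sep Z' V₀ = ∅
  · exact ⟨V₀, ⟨h0, h0e, hs⟩, by rw [VLval, if_pos hs]⟩
  · have ha : agr Z' V₀ = ∅ := h0f.resolve_left hs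
    refine ⟨-V₀, ⟨hV.neg V₀ h0, by simpa [sign_neg_eq_zero] using h0e, by rw [sep_neg]; exact ha⟩, ?_⟩
    have hagr : agr Z' (-V₀) = sep Z' V₀ := agr_neg _ _
    rw [VLval, if_neg hs, hagr, if_neg hs, neg_apply, neg_neg]

lemma VLval_unique (hV : Fam E V) {Z' : SignVec ℕ} {e : ℕ}
    (hze : Z' e = 0) (horth : ∀ W ∈ V, W e = 0 → Orth Z' W)
    {V₁ V₂ : SignVec ℕ}
    (h1 : V₁ ∈ V) (h1e : V₁ e ≠ 0) (h1f : sep Z' V₁ = ∅ ∨ agr Z' V₁ = ∅)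
    (h2 : V₂ ∈ V) (h2e : V₂ e ≠ 0) (h2f : sep Z' V₂ = ∅ ∨ agr Z' V₂ = ∅) :
    VLval Z' e V₁ = VLval Z' e V₂ := by
  classical
  obtain ⟨W₁, ⟨hW₁V, hW₁e, hW₁s⟩, hv₁⟩ := VLval_norm hV h1 h1e h1f
  obtain ⟨W₂, ⟨hW₂V, hW₂e, hW₂s⟩, hv₂⟩ := VLval_norm hV h2 h2e h2f
  rw [hv₁, hv₂]
  by_cases ha₁ : agr Z' W₁ = ∅ <;> by_cases ha₂ : agr Z' W₂ = ∅
  · simp [ha₁, ha₂]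
  · exact absurd (VL_case_disj_agr hV hze horth hW₁V hW₂V hW₁e hW₂e hW₁s ha₁ hW₂s ha₂) not_false
  · exact absurd (VL_case_disj_agr hV hze horth hW₂V hW₁V hW₂e hW₁e hW₂s ha₂ hW₁s ha₁) not_false
  · rw [if_neg ha₁, if_neg ha₂]
    by_contra hne
    have hne' : W₁ e = -(W₂ e) := by
      rcases sign_eq_or_opp hW₁e hW₂e with h | h
      · exact absurd (by rw [h]) hne
      · exact h
    exact VL_case_agr_agr hV hze horth hW₁V hW₂V hW₁e hW₂e hW₁s ha₁ hW₂s hne'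

/-- **Vector lifting**: a vector of the one-point contraction lifts to a vector
of the family after choosing an appropriate value at the contracted element. -/
lemma VL (hV : Fam E V) {Z' : SignVec ℕ} {e : ℕ}
    (hsupp : supp Z' ⊆ E) (hze : Z' e = 0)
    (horth : ∀ W ∈ V, W e = 0 → Orth Z' W) :
    ∃ σ, updSV Z' e σ ∈ vect E V := by
  classical
  by_cases hf : ∃ V₀, V₀ ∈ V ∧ V₀ e ≠ 0 ∧ (sep Z' V₀ = ∅ ∨ agr Z' V₀ = ∅)
  · obtain ⟨V₀, hV₀, hV₀e, hV₀f⟩ := hf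
    refine ⟨VLval Z' e V₀, ?_, ?_⟩
    · intro d hd
      rw [mem_supp] at hd
      by_cases hde : d = e
      · subst hde
        exact hV.supp_sub V₀ hV₀ hV₀e
      · rw [updSV_ne _ _ hde] at hd
        exact hsupp hd
    · intro W hW
      by_cases hWe : W e = 0
      · rw [orth_iff, sep_updSV_nonempty hze, agr_updSV_nonempty hze]
        have h1 : ¬(VLval Z' e V₀ = -(W e) ∧ VLval Z' e V₀ ≠ 0) := by
          rw [hWe]; rintro ⟨h, h'⟩; simp at h; exact h' h
        have h2 : ¬(VLval Z' e V₀ = W e ∧ VLval Z' e V₀ ≠ 0) := by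
          rw [hWe]; rintro ⟨h, h'⟩; exact h' h
        rw [or_iff_left h1, or_iff_left h2, ← orth_iff]
        exact horth W hW hWe
      · by_cases hWf : sep Z' W = ∅ ∨ agr Z' W = ∅
        · have huniq : VLval Z' e V₀ = VLval Z' e W :=
            VLval_unique hV hze horth hV₀ hV₀e hV₀f hW hWe hWf
          rw [orth_iff, sep_updSV_nonempty hze, agr_updSV_nonempty hze, huniq]
          by_cases hs : sep Z' W = ∅ <;> by_cases ha : agr Z' W = ∅
          · rw [VLval, if_pos hs, if_pos ha]
            simp only [Set.not_nonempty_iff_eq_empty.symm] at hs ha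
            constructor
            · rintro (h | ⟨h, h'⟩)
              · exact absurd h (by rw [Set.not_nonempty_iff_eq_empty]; rw [Set.not_nonempty_iff_eq_empty] at hs; exact hs)
              · exact absurd rfl h'
            · rintro (h | ⟨h, h'⟩)
              · exact absurd h ha
              · exact absurd rfl h'
          · rw [VLval, if_pos hs, if_neg ha]
            have hWne : -(W e) ≠ 0 := by simpa [sign_neg_eq_zero] using hWe
            constructor
            · intro _; exact Or.inl (Set.nonempty_iff_ne_empty.mpr ha)
            · intro _; exact Or.inr ⟨rfl, hWne⟩
          · rw [VLval, if_neg hs]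
            constructor
            · intro _; exact Or.inr ⟨rfl, hWe⟩
            · intro _; exact Or.inl (Set.nonempty_iff_ne_empty.mpr hs)
          · exact absurd hWf (by
              push_neg
              exact ⟨Set.nonempty_iff_ne_empty.mpr hs, Set.nonempty_iff_ne_empty.mpr ha⟩)
        · push_neg at hWf
          rw [orth_iff, sep_updSV_nonempty hze, agr_updSV_nonempty hze]
          constructor
          · intro _; exact Or.inl hWf.2
          · intro _; exact Or.inl hWf.1

  · refine ⟨0, ?_, ?_⟩
    · intro d hd
      rw [mem_supp] at hd
      by_cases hde : d = e
      · subst hde; rw [updSV_self] at hd; exact absurd rfl hd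
      · rw [updSV_ne _ _ hde] at hd; exact hsupp hd
    · intro W hW
      have hupd : ∀ d, updSV Z' e 0 d = Z' d := by
        intro d
        by_cases hde : d = e
        · subst hde; rw [updSV_self, hze]
        · rw [updSV_ne _ _ hde]
      have hupd' : updSV Z' e 0 = Z' := funext hupd
      rw [hupd']
      by_cases hWe : W e = 0
      · exact horth W hW hWe
      · push_neg at hf
        have := hf W hW hWe
        rw [orth_iff]
        constructor
        · intro _; exact this.2
        · intro _; exact this.1
end VLmain

section FVE

variable {E : Set ℕ} {V : Set (SignVec ℕ)}

lemma sign_eq_neg_self {s : SignType} (h : s = -s) : s = 0 := by cases s <;> simp_all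

lemma sign_neg_inj {s t : SignType} (h : -s = -t) : s = t := by cases s <;> cases t <;> simp_all

/-- The fiber interval property for vectors. -/
lemma vect_interval {X₁ X₂ : SignVec ℕ} {e : ℕ} {a : SignType}
    (h1 : X₁ ∈ vect E V) (h2 : X₂ ∈ vect E V) (ha : a ≠ 0)
    (he1 : X₁ e = a) (he2 : X₂ e = -a) (hagree : ∀ d, d ≠ e → X₁ d = X₂ d) :
    updSV X₁ e 0 ∈ vect E V := by
  refine ⟨?_, ?_⟩
  · intro d hd
    rw [mem_supp] at hd
    by_cases hde : d = e
    · subst hde; rw [updSV_self] at hd; exact absurd rfl hd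
    · rw [updSV_ne _ _ hde] at hd; exact h1.1 hd
  · intro V₀ hV₀
    have hS1 : (sep (updSV X₁ e 0) V₀).Nonempty ↔ ∃ d, d ≠ e ∧ d ∈ sep X₁ V₀ := by
      constructor
      · rintro ⟨d, hd1, hd2⟩
        have hde : d ≠ e := by
          intro h; subst h; rw [updSV_self] at hd2; exact hd2 rfl
        rw [updSV_ne _ _ hde] at hd1 hd2
        exact ⟨d, hde, hd1, hd2⟩
      · rintro ⟨d, hde, hd1, hd2⟩
        exact ⟨d, by rw [updSV_ne _ _ hde]; exact hd1, by rw [updSV_ne _ _ hde]; exact hd2⟩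
    have hA1 : (agr (updSV X₁ e 0) V₀).Nonempty ↔ ∃ d, d ≠ e ∧ d ∈ agr X₁ V₀ := by
      constructor
      · rintro ⟨d, hd1, hd2⟩
        have hde : d ≠ e := by
          intro h; subst h; rw [updSV_self] at hd2; exact hd2 rfl
        rw [updSV_ne _ _ hde] at hd1 hd2
        exact ⟨d, hde, hd1, hd2⟩
      · rintro ⟨d, hde, hd1, hd2⟩
        exact ⟨d, by rw [updSV_ne _ _ hde]; exact hd1, by rw [updSV_ne _ _ hde]; exact hd2⟩
    have hsep1 : (sep X₁ V₀).Nonempty ↔ (∃ d, d ≠ e ∧ d ∈ sep X₁ V₀) ∨ a = -(V₀ e) := by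
      constructor
      · rintro ⟨d, hd⟩
        by_cases hde : d = e
        · subst hde; right; rw [← he1]; exact hd.1
        · exact Or.inl ⟨d, hde, hd⟩
      · rintro (⟨d, _, hd⟩ | h)
        · exact ⟨d, hd⟩
        · exact ⟨e, by rw [he1]; exact h, by rw [he1]; exact ha⟩
    have hagr1 : (agr X₁ V₀).Nonempty ↔ (∃ d, d ≠ e ∧ d ∈ agr X₁ V₀) ∨ a = V₀ e := by
      constructor
      · rintro ⟨d, hd⟩
        by_cases hde : d = e
        · subst hde; right; rw [← he1]; exact hd.1
        · exact Or.inl ⟨d, hde, hd⟩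
      · rintro (⟨d, _, hd⟩ | h)
        · exact ⟨d, hd⟩
        · exact ⟨e, by rw [he1]; exact h, by rw [he1]; exact ha⟩
    have hsepd : ∀ d, d ≠ e → (d ∈ sep X₂ V₀ ↔ d ∈ sep X₁ V₀) := by
      intro d hde; rw [mem_sep, mem_sep, hagree d hde]
    have hagrd : ∀ d, d ≠ e → (d ∈ agr X₂ V₀ ↔ d ∈ agr X₁ V₀) := by
      intro d hde; rw [mem_agr, mem_agr, hagree d hde]
    have hane : -a ≠ 0 := by simpa [sign_neg_eq_zero] using ha
    have hsep2 : (sep X₂ V₀).Nonempty ↔ (∃ d, d ≠ e ∧ d ∈ sep X₁ V₀) ∨ a = V₀ e := by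
      constructor
      · rintro ⟨d, hd⟩
        by_cases hde : d = e
        · subst hde
          right
          have h2' := hd.1
          rw [he2] at h2'
          exact sign_neg_inj h2'
        · exact Or.inl ⟨d, hde, (hsepd d hde).mp hd⟩
      · rintro (⟨d, hde, hd⟩ | h)
        · exact ⟨d, (hsepd d hde).mpr hd⟩
        · exact ⟨e, by rw [he2, h], by rw [he2]; exact hane⟩
    have hagr2 : (agr X₂ V₀).Nonempty ↔ (∃ d, d ≠ e ∧ d ∈ agr X₁ V₀) ∨ a = -(V₀ e) := by
      constructor
      · rintro ⟨d, hd⟩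
        by_cases hde : d = e
        · subst hde
          right
          have h2' := hd.1
          rw [he2] at h2'
          rw [← h2', neg_neg]
        · exact Or.inl ⟨d, hde, (hagrd d hde).mp hd⟩
      · rintro (⟨d, hde, hd⟩ | h)
        · exact ⟨d, (hagrd d hde).mpr hd⟩
        · exact ⟨e, by rw [he2, h, neg_neg], by rw [he2]; exact hane⟩
    have O1 := h1.2 V₀ hV₀
    have O2 := h2.2 V₀ hV₀
    rw [orth_iff, hsep1, hagr1] at O1
    rw [orth_iff, hsep2, hagr2] at O2
    rw [orth_iff, hS1, hA1]
    by_cases hav : a = V₀ e <;> by_cases hav' : a = -(V₀ e)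
    · exfalso
      rw [hav] at hav'
      exact (hav ▸ ha) (sign_eq_neg_self hav')
    · have hS : ∃ d, d ≠ e ∧ d ∈ sep X₁ V₀ := by
        rcases O1.mpr (Or.inr hav) with h | h
        · exact h
        · exact absurd h hav'
      have hA : ∃ d, d ≠ e ∧ d ∈ agr X₁ V₀ := by
        rcases O2.mp (Or.inr hav) with h | h
        · exact h
        · exact absurd h hav'
      exact iff_of_true hS hA
    · have hA : ∃ d, d ≠ e ∧ d ∈ agr X₁ V₀ := by
        rcases O1.mp (Or.inr hav') with h | h
        · exact h
        · exact absurd h hav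
      have hS : ∃ d, d ≠ e ∧ d ∈ sep X₁ V₀ := by
        rcases O2.mpr (Or.inr hav') with h | h
        · exact h
        · exact absurd h hav
      exact iff_of_true hS hA
    · constructor
      · intro h
        rcases O1.mp (Or.inl h) with h' | h'
        · exact h'
        · exact absurd h' hav
      · intro h
        rcases O1.mpr (Or.inl h) with h' | h'
        · exact h'
        · exact absurd h' hav'

/-- Contraction of a family by a set of elements. -/
def contrF (V : Set (SignVec ℕ)) (A : Set ℕ) : Set (SignVec ℕ) := {W ∈ V | ∀ a ∈ A, W a = 0}

lemma contrFam (hV : Fam E V) (A : Set ℕ) : Fam (E \ A) (contrF V A) := by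
  constructor
  · exact hV.fin.diff
  · rintro X ⟨hX, hX0⟩ d hd
    rw [mem_supp] at hd
    refine ⟨hV.supp_sub X hX hd, fun hdA => hd (hX0 d hdA)⟩
  · exact ⟨hV.zero, fun a _ => rfl⟩
  · rintro X ⟨hX, hX0⟩
    exact ⟨hV.neg X hX, fun a ha => by rw [neg_apply, hX0 a ha]; rfl⟩
  · rintro X ⟨hX, hX0⟩ Y ⟨hY, hY0⟩
    exact ⟨hV.comp X hX Y hY, fun a ha => by rw [compose_right (hX0 a ha)]; exact hY0 a ha⟩
  · rintro X ⟨hX, hX0⟩ Y ⟨hY, hY0⟩ e he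
    obtain ⟨Z, hZ, hZe, hZ'⟩ := hV.elim X hX Y hY e he
    refine ⟨Z, ⟨hZ, fun a ha => ?_⟩, hZe, hZ'⟩
    have haX : X a = 0 := hX0 a ha
    have hasep : a ∉ sep X Y := by rintro ⟨_, h2⟩; exact h2 haX
    rw [hZ' a hasep, compose_right haX]
    exact hY0 a ha

lemma vect_zero_coord {X : SignVec ℕ} {d : ℕ} (hX : X ∈ vect E V) :
    updSV X d 0 ∈ vect (E \ {d}) (contrF V {d}) := by
  refine ⟨?_, ?_⟩
  · intro x hx
    rw [mem_supp] at hx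
    by_cases hxd : x = d
    · subst hxd; rw [updSV_self] at hx; exact absurd rfl hx
    · rw [updSV_ne _ _ hxd] at hx
      exact ⟨hX.1 hx, by simpa using hxd⟩
  · rintro W ⟨hW, hW0⟩
    have hWd : W d = 0 := hW0 d rfl
    have hsep : sep (updSV X d 0) W = sep X W := by
      ext x
      rcases eq_or_ne x d with rfl | hxd
      · constructor
        · rintro ⟨_, h⟩; rw [updSV_self] at h; simp at h
        · rintro ⟨h, h'⟩; rw [hWd] at h; simp at h; exact absurd h h'
      · rw [mem_sep, mem_sep, updSV_ne _ _ hxd]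
    have hagr : agr (updSV X d 0) W = agr X W := by
      ext x
      rcases eq_or_ne x d with rfl | hxd
      · constructor
        · rintro ⟨_, h⟩; rw [updSV_self] at h; simp at h
        · rintro ⟨h, h'⟩; rw [hWd] at h; exact absurd h h'
      · rw [mem_agr, mem_agr, updSV_ne _ _ hxd]
    rw [orth_iff, hsep, hagr, ← orth_iff]
    exact hX.2 W hW

lemma sep_updSV_zero (X Y : SignVec ℕ) (d : ℕ) :
    sep (updSV X d 0) (updSV Y d 0) = sep X Y \ {d} := by
  ext x
  rcases eq_or_ne x d with rfl | hxd
  · constructor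
    · rintro ⟨_, h⟩; rw [updSV_self] at h; simp at h
    · rintro ⟨_, h⟩; exact absurd rfl h
  · constructor
    · rintro ⟨h1, h2⟩
      rw [updSV_ne X 0 hxd, updSV_ne Y 0 hxd] at h1
      rw [updSV_ne X 0 hxd] at h2
      exact ⟨⟨h1, h2⟩, hxd⟩
    · rintro ⟨⟨h1, h2⟩, -⟩
      exact ⟨by rw [updSV_ne X 0 hxd, updSV_ne Y 0 hxd]; exact h1,
        by rw [updSV_ne X 0 hxd]; exact h2⟩

lemma compose_updSV_zero (X Y : SignVec ℕ) (d : ℕ) {x : ℕ} (hxd : x ≠ d) :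
    compose (updSV X d 0) (updSV Y d 0) x = compose X Y x := by
  by_cases hX0 : X x = 0
  · rw [compose_right (by rw [updSV_ne _ _ hxd]; exact hX0), compose_right hX0, updSV_ne _ _ hxd]
  · rw [compose_left (by rw [updSV_ne _ _ hxd]; exact hX0), compose_left hX0, updSV_ne _ _ hxd]

/-- **Vector elimination.** -/
lemma FVE : ∀ (k : ℕ) (E : Set ℕ) (V : Set (SignVec ℕ)), E.ncard ≤ k → Fam E V →
    ∀ X ∈ vect E V, ∀ Y ∈ vect E V, ∀ e ∈ sep X Y,
    ∃ Z ∈ vect E V, Z e = 0 ∧ ∀ e' ∉ sep X Y, Z e' = compose X Y e' := by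
  intro k
  induction k with
  | zero =>
    intro E V hcard hV X hX Y hY e he
    exfalso
    have hE : E = ∅ := by
      have hfin := hV.fin
      exact (Set.ncard_eq_zero hfin).mp (Nat.le_zero.mp hcard)
    have : X e ≠ 0 := he.2
    have := hX.1 (mem_supp.mpr this)
    rw [hE] at this
    exact this
  | succ k IH =>
    intro E V hcard hV X hX Y hY e he
    by_cases hd : ∃ d ∈ sep X Y, d ≠ e
    · obtain ⟨d, hdsep, hde⟩ := hd
      have hdE : d ∈ E := hX.1 (mem_supp.mpr hdsep.2)
      have hV' : Fam (E \ {d}) (contrF V {d}) := contrFam hV {d}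
      have hcard' : (E \ {d}).ncard ≤ k := by
        have h1 : (E \ {d}).ncard = E.ncard - 1 := Set.ncard_diff_singleton_of_mem hdE
        omega
      have hX' := vect_zero_coord (d := d) hX
      have hY' := vect_zero_coord (d := d) hY
      have hesep' : e ∈ sep (updSV X d 0) (updSV Y d 0) := by
        rw [sep_updSV_zero]
        exact ⟨he, by simpa using (Ne.symm hde)⟩
      obtain ⟨Z', hZ'v, hZ'e, hZ'⟩ := IH (E \ {d}) (contrF V {d}) hcard' hV'
        (updSV X d 0) hX' (updSV Y d 0) hY' e hesep'
      have hZ'd : Z' d = 0 := by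
        by_contra h
        exact ((hZ'v.1 (mem_supp.mpr h)).2) rfl
      have hZ'supp : supp Z' ⊆ E := fun x hx => (hZ'v.1 hx).1
      have horth : ∀ W ∈ V, W d = 0 → Orth Z' W := fun W hW hWd => hZ'v.2 W ⟨hW, fun a ha => by
        rw [Set.mem_singleton_iff] at ha; rw [ha]; exact hWd⟩
      obtain ⟨σ, hσ⟩ := VL hV hZ'supp hZ'd horth
      refine ⟨updSV Z' d σ, hσ, ?_, ?_⟩
      · rw [updSV_ne _ _ (Ne.symm hde)]; exact hZ'e
      · intro e' he'
        have he'd : e' ≠ d := fun h => he' (h ▸ hdsep)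
        have he'sep' : e' ∉ sep (updSV X d 0) (updSV Y d 0) := by
          rw [sep_updSV_zero]; rintro ⟨h, _⟩; exact he' h
        rw [updSV_ne _ _ he'd, hZ' e' he'sep', compose_updSV_zero X Y d he'd]
    · -- sep X Y = {e}
      push_neg at hd
      have ha : X e ≠ 0 := he.2
      have hYe : Y e = -(X e) := by
        have := he.1
        rw [this, neg_neg]
      have hP := vect_compose hX hY
      have hQ := vect_compose hY hX
      have hPe : compose X Y e = X e := compose_left ha
      have hQe : compose Y X e = -(X e) := by
        rw [compose_left (by rw [hYe]; simpa [sign_neg_eq_zero] using ha), hYe]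
      have hagree : ∀ x, x ≠ e → compose X Y x = compose Y X x := by
        intro x hxe
        have hxsep : x ∉ sep X Y := fun h => hxe (hd x h)
        by_cases hX0 : X x = 0
        · rw [compose_right hX0]
          by_cases hY0 : Y x = 0
          · rw [compose_right (X := Y) hY0, hX0, hY0]
          · rw [compose_left hY0]
        · by_cases hY0 : Y x = 0
          · rw [compose_left hX0, compose_right (X := Y) hY0]
          · rw [compose_left hX0, compose_left hY0]
            rcases sign_eq_or_opp hX0 hY0 with h | h
            · exact h.symm ▸ rfl
            · exact absurd ⟨h, hX0⟩ hxsep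
      have := vect_interval hP hQ ha hPe hQe hagree
      refine ⟨updSV (compose X Y) e 0, this, updSV_self _ _ _, ?_⟩
      intro e' he'
      have he'e : e' ≠ e := fun h => he' (h ▸ he)
      rw [updSV_ne _ _ he'e]

end FVE

section A6sec

variable {E : Set ℕ} {V : Set (SignVec ℕ)}

/-- The vectors of a family form a family. -/
lemma WFam (hV : Fam E V) : Fam E (vect E V) :=
  ⟨hV.fin, fun X hX => hX.1, vect_zero E V, fun X hX => vect_neg hX,
    fun X hX Y hY => vect_compose hX hY,
    fun X hX Y hY e he => FVE E.ncard E V le_rfl hV X hX Y hY e he⟩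

lemma sep_sub_supp (X Y : SignVec ℕ) : sep X Y ⊆ supp X := fun _ hd => hd.2

lemma conf_pointwise {A B : SignVec ℕ} (hsub : supp A ⊆ supp B) (hsep : sep A B = ∅) :
    ∀ d, A d = 0 ∨ A d = B d := by
  intro d
  by_cases hA : A d = 0
  · exact Or.inl hA
  have hB : B d ≠ 0 := mem_supp.mp (hsub (mem_supp.mpr hA))
  rcases sign_eq_or_opp hA hB with h | h
  · exact Or.inr h
  · exact absurd ⟨h, hA⟩ (Set.eq_empty_iff_forall_notMem.mp hsep d)

/-- Stage 1 : a conformal member below `Z` with the same value at `e`. -/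
lemma A6_stage1 (hV : Fam E V) {Z : SignVec ℕ} (hZ : Z ∈ V) {e : ℕ} (hZe : Z e ≠ 0) :
    ∃ U₀, (U₀ ∈ V ∧ supp U₀ ⊆ supp Z ∧ U₀ e = Z e) ∧ sep U₀ Z = ∅ := by
  have hfinZ : (supp Z).Finite := hV.fin.subset (hV.supp_sub Z hZ)
  apply exists_good_of_descent (P := fun W => W ∈ V ∧ supp W ⊆ supp Z ∧ W e = Z e)
    (Good := fun W => sep W Z = ∅) (fun W => (sep W Z).ncard) ?_ Z ⟨hZ, subset_rfl, rfl⟩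
  rintro W ⟨hW, hWsub, hWe⟩
  by_cases hsep : sep W Z = ∅
  · exact Or.inl hsep
  right
  obtain ⟨d₀, hd₀⟩ := Set.nonempty_iff_ne_empty.mpr hsep
  obtain ⟨W₁, hW₁V, hW₁d₀, hW₁⟩ := hV.elim W hW Z hZ d₀ hd₀
  have hesep : e ∉ sep W Z := by
    rintro ⟨h1, _⟩
    rw [hWe] at h1
    exact hZe (sign_eq_neg_self h1)
  have hW₁sub : supp W₁ ⊆ supp Z := by
    intro x hx
    rw [mem_supp] at hx
    by_cases hxs : x ∈ sep W Z
    · exact hWsub (sep_sub_supp W Z hxs)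
    · rw [hW₁ x hxs] at hx
      rcases compose_mem_cases (X := W) (Y := Z) x with hc | ⟨_, hc⟩
      · rw [hc] at hx; exact hWsub (mem_supp.mpr hx)
      · rw [hc] at hx; exact mem_supp.mpr hx
  have hW₁e : W₁ e = Z e := by
    rw [hW₁ e hesep, compose_left (hWe ▸ hZe)]
    exact hWe
  have hW₁sep : sep W₁ Z ⊆ sep W Z \ {d₀} := by
    rintro x ⟨hx1, hx2⟩
    have hxd₀ : x ≠ d₀ := fun h => hx2 (h ▸ hW₁d₀)
    refine ⟨?_, hxd₀⟩
    by_contra hxs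
    rw [hW₁ x hxs] at hx1 hx2
    rcases compose_mem_cases (X := W) (Y := Z) x with hc | ⟨hc0, hc⟩
    · rw [hc] at hx1 hx2; exact hxs ⟨hx1, hx2⟩
    · rw [hc] at hx1 hx2
      exact hx2 (sign_eq_neg_self hx1)
  refine ⟨W₁, ⟨hW₁V, hW₁sub, hW₁e⟩, ?_⟩
  apply Set.ncard_lt_ncard
  · refine ssubset_of_subset_of_ne (hW₁sep.trans Set.diff_subset) ?_
    intro h
    have : d₀ ∈ sep W₁ Z := h ▸ hd₀
    exact (hW₁sep this).2 rfl
  · exact hfinZ.subset (sep_sub_supp W Z |>.trans hWsub)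

/-- Inner lemma (ia): below a non-minimal member there is a proper conformal nonzero member. -/
lemma A6_inner_conf (hV : Fam E V) {W : SignVec ℕ} (hW : W ∈ V)
    {V₁ : SignVec ℕ} (hV₁ : V₁ ∈ V) (hV₁ne : V₁ ≠ 0)
    (hV₁sub : supp V₁ ⊆ supp W) (hV₁neq : supp V₁ ≠ supp W) :
    ∃ Wt, (Wt ∈ V ∧ Wt ≠ 0 ∧ supp Wt ⊆ supp W ∧ supp Wt ≠ supp W) ∧ sep Wt W = ∅ := by
  have hfinW : (supp W).Finite := hV.fin.subset (hV.supp_sub W hW)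
  apply exists_good_of_descent
    (P := fun V' => V' ∈ V ∧ V' ≠ 0 ∧ supp V' ⊆ supp W ∧ supp V' ≠ supp W)
    (Good := fun V' => sep V' W = ∅) (fun V' => (sep V' W).ncard) ?_ V₁
    ⟨hV₁, hV₁ne, hV₁sub, hV₁neq⟩
  rintro V' ⟨hV', hV'ne, hV'sub, hV'neq⟩
  by_cases hsep : sep V' W = ∅
  · exact Or.inl hsep
  right
  obtain ⟨h, hhW, hhV'⟩ := Set.exists_of_ssubset (ssubset_of_subset_of_ne hV'sub hV'neq)
  obtain ⟨d, hd⟩ := Set.nonempty_iff_ne_empty.mpr hsep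
  obtain ⟨W₂, hW₂V, hW₂d, hW₂⟩ := hV.elim V' hV' W hW d hd
  have hhsep : h ∉ sep V' W := fun hs => hhV' (sep_sub_supp V' W hs)
  have hV'h : V' h = 0 := by
    by_contra hc; exact hhV' (mem_supp.mpr hc)
  have hW₂h : W₂ h = W h := by rw [hW₂ h hhsep, compose_right hV'h]
  have hW₂ne : W₂ ≠ 0 := by
    intro hc
    rw [mem_supp] at hhW
    apply hhW
    rw [← hW₂h, hc]; rfl
  have hW₂sub : supp W₂ ⊆ supp W := by
    intro x hx
    rw [mem_supp] at hx
    by_cases hxs : x ∈ sep V' W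
    · exact hV'sub (sep_sub_supp V' W hxs)
    · rw [hW₂ x hxs] at hx
      rcases compose_mem_cases (X := V') (Y := W) x with hc | ⟨_, hc⟩
      · rw [hc] at hx; exact hV'sub (mem_supp.mpr hx)
      · rw [hc] at hx; exact mem_supp.mpr hx
  have hW₂neq : supp W₂ ≠ supp W := by
    intro hc
    have hdW : d ∈ supp W := hV'sub (sep_sub_supp V' W hd)
    rw [← hc, mem_supp] at hdW
    exact hdW hW₂d
  have hW₂sep : sep W₂ W ⊆ sep V' W \ {d} := by
    rintro x ⟨hx1, hx2⟩
    have hxd : x ≠ d := fun hxx => hx2 (hxx ▸ hW₂d)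
    refine ⟨?_, hxd⟩
    by_contra hxs
    rw [hW₂ x hxs] at hx1 hx2
    rcases compose_mem_cases (X := V') (Y := W) x with hc | ⟨hc0, hc⟩
    · rw [hc] at hx1 hx2; exact hxs ⟨hx1, hx2⟩
    · rw [hc] at hx1 hx2
      exact hx2 (sign_eq_neg_self hx1)
  refine ⟨W₂, ⟨hW₂V, hW₂ne, hW₂sub, hW₂neq⟩, ?_⟩
  apply Set.ncard_lt_ncard
  · refine ssubset_of_subset_of_ne (hW₂sep.trans Set.diff_subset) ?_
    intro hcc
    have : d ∈ sep W₂ W := hcc ▸ hd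
    exact (hW₂sep this).2 rfl
  · exact hfinW.subset ((sep_sub_supp V' W).trans hV'sub)

end A6sec

section A6top

variable {E : Set ℕ} {V : Set (SignVec ℕ)}

/-- Inner lemma (ib): repair the prescribed coordinate. -/
lemma A6_improve (hV : Fam E V) {U₀ : SignVec ℕ} (hU₀ : U₀ ∈ V) {e : ℕ} (hU₀e : U₀ e ≠ 0)
    {Wt : SignVec ℕ} (hWtV : Wt ∈ V) (hWtne : Wt ≠ 0) (hWtsub : supp Wt ⊆ supp U₀)
    (hWtneq : supp Wt ≠ supp U₀) (hWtsep : sep Wt U₀ = ∅) :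
    ∃ Zs, Zs ∈ V ∧ Zs e = U₀ e ∧ supp Zs ⊆ supp U₀ ∧ supp Zs ≠ supp U₀ ∧ sep Zs U₀ = ∅ := by
  have hfinU : (supp U₀).Finite := hV.fin.subset (hV.supp_sub U₀ hU₀)
  have hconf : ∀ d, Wt d = 0 ∨ Wt d = U₀ d := conf_pointwise hWtsub hWtsep
  by_cases hce : Wt e = 0
  · -- construct the seed Z₁ by eliminating an element of supp Wt against -Wt
    obtain ⟨dt, hdt⟩ := ne_zero_iff_supp.mp hWtne
    have hWdt : Wt dt ≠ 0 := hdt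
    have hWdtU : Wt dt = U₀ dt := (hconf dt).resolve_left hWdt
    have hsepU : sep U₀ (-Wt) = supp Wt := by
      ext x
      constructor
      · rintro ⟨h1, h2⟩
        rw [neg_apply, neg_neg] at h1
        rw [mem_supp, ← h1]; exact h2
      · intro hx
        rw [mem_supp] at hx
        have hxU : Wt x = U₀ x := (hconf x).resolve_left hx
        refine ⟨by rw [neg_apply, neg_neg, hxU], ?_⟩
        rw [← hxU]; exact hx
      

    have hdtsep : dt ∈ sep U₀ (-Wt) := by rw [hsepU]; exact hdt
    obtain ⟨Z₁, hZ₁V, hZ₁dt, hZ₁⟩ := hV.elim U₀ hU₀ (-Wt) (hV.neg Wt hWtV) dt hdtsep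
    have hZ₁out : ∀ x, x ∉ supp Wt → Z₁ x = U₀ x := by
      intro x hx
      have hx' : x ∉ sep U₀ (-Wt) := by rw [hsepU]; exact hx
      rw [mem_supp, not_not] at hx
      rw [hZ₁ x hx']
      rcases compose_mem_cases (X := U₀) (Y := -Wt) x with hc | ⟨hc0, hc⟩
      · exact hc
      · rw [hc, neg_apply, hx, hc0]; rfl
    have hZ₁e : Z₁ e = U₀ e := hZ₁out e (by rw [mem_supp, not_not]; exact hce)
    have hZ₁sub : supp Z₁ ⊆ supp U₀ := by
      intro x hx
      rw [mem_supp] at hx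
      by_cases hxw : x ∈ supp Wt
      · exact hWtsub hxw
      · rw [hZ₁out x hxw] at hx; exact mem_supp.mpr hx
    have hZ₁neq : supp Z₁ ≠ supp U₀ := by
      intro hc
      have : dt ∈ supp U₀ := hWtsub hdt
      rw [← hc, mem_supp] at this
      exact this hZ₁dt
    have hZ₁sep : sep Z₁ U₀ ⊆ supp Wt := by
      rintro x ⟨hx1, hx2⟩
      by_contra hxw
      rw [hZ₁out x hxw] at hx1 hx2
      exact hx2 (sign_eq_neg_self hx1)
    -- main descent
    have key := exists_good_of_descent
      (P := fun Zk => Zk ∈ V ∧ Zk e = U₀ e ∧ supp Zk ⊆ supp U₀ ∧ supp Zk ≠ supp U₀ ∧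
        sep Zk U₀ ⊆ supp Wt)
      (Good := fun Zk => sep Zk U₀ = ∅)
      (fun Zk => (sep Zk U₀).ncard) ?_ Z₁ ⟨hZ₁V, hZ₁e, hZ₁sub, hZ₁neq, hZ₁sep⟩
    · obtain ⟨Zs, ⟨h1, h2, h3, h4, _⟩, h6⟩ := key
      exact ⟨Zs, h1, h2, h3, h4, h6⟩
    rintro Zk ⟨hZkV, hZke, hZksub, hZkneq, hZksep⟩
    by_cases hsep : sep Zk U₀ = ∅
    · exact Or.inl hsep
    right
    obtain ⟨d', hd'⟩ := Set.nonempty_iff_ne_empty.mpr hsep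
    have hd'w : d' ∈ supp Wt := hZksep hd'
    have hWd' : Wt d' ≠ 0 := hd'w
    have hWd'U : Wt d' = U₀ d' := (hconf d').resolve_left hWd'
    have hd'sepW : d' ∈ sep Zk Wt := by
      refine ⟨?_, hd'.2⟩
      rw [hWd'U]; exact hd'.1
    obtain ⟨Zn, hZnV, hZnd', hZn⟩ := hV.elim Zk hZkV Wt hWtV d' hd'sepW
    have hsepsub : sep Zk Wt ⊆ sep Zk U₀ := by
      rintro x ⟨hx1, hx2⟩
      have hWx : Wt x ≠ 0 := by
        intro h; rw [h] at hx1; simp at hx1; exact hx2 hx1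
      have := (hconf x).resolve_left hWx
      exact ⟨by rw [← this]; exact hx1, hx2⟩
    have hZke' : Zk e ≠ 0 := by rw [hZke]; exact hU₀e
    have hesepW : e ∉ sep Zk Wt := by
      rintro ⟨h1, _⟩
      rw [hce] at h1; simp at h1
      exact hZke' h1
    have hZne : Zn e = U₀ e := by
      rw [hZn e hesepW, compose_left hZke']; exact hZke
    have hZnsub : supp Zn ⊆ supp U₀ := by
      intro x hx
      rw [mem_supp] at hx
      by_cases hxs : x ∈ sep Zk Wt
      · exact hZksub (sep_sub_supp Zk Wt hxs)
      · rw [hZn x hxs] at hx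
        rcases compose_mem_cases (X := Zk) (Y := Wt) x with hc | ⟨_, hc⟩
        · rw [hc] at hx; exact hZksub (mem_supp.mpr hx)
        · rw [hc] at hx; exact hWtsub (mem_supp.mpr hx)
    have hU₀d' : U₀ d' ≠ 0 := by
      intro h
      have := hd'.1
      rw [h] at this; simp at this
      exact hd'.2 this
    have hZnneq : supp Zn ≠ supp U₀ := by
      intro hc
      have : d' ∈ supp U₀ := mem_supp.mpr hU₀d'
      rw [← hc, mem_supp] at this
      exact this hZnd'
    have hZnsep : sep Zn U₀ ⊆ sep Zk U₀ \ {d'} := by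
      rintro x ⟨hx1, hx2⟩
      have hxd' : x ≠ d' := fun h => hx2 (h ▸ hZnd')
      refine ⟨?_, hxd'⟩
      by_cases hxs : x ∈ sep Zk Wt
      · exact hsepsub hxs
      · rw [hZn x hxs] at hx1 hx2
        rcases compose_mem_cases (X := Zk) (Y := Wt) x with hc | ⟨hc0, hc⟩
        · rw [hc] at hx1 hx2; exact ⟨hx1, hx2⟩
        · rw [hc] at hx1 hx2
          exfalso
          have hWx : Wt x ≠ 0 := hx2
          have := (hconf x).resolve_left hWx
          rw [this] at hx1 hx2
          exact hx2 (sign_eq_neg_self hx1)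
    refine ⟨Zn, ⟨hZnV, hZne, hZnsub, hZnneq, fun x hx => ((hZnsep hx).1 |> hZksep)⟩, ?_⟩
    apply Set.ncard_lt_ncard
    · refine ssubset_of_subset_of_ne (hZnsep.trans Set.diff_subset) ?_
      intro hcc
      have : d' ∈ sep Zn U₀ := hcc ▸ hd'
      exact (hZnsep this).2 rfl
    · exact hfinU.subset ((sep_sub_supp Zk U₀).trans hZksub)
  · -- Wt already contains e
    have hWte : Wt e = U₀ e := (hconf e).resolve_left hce
    exact ⟨Wt, hWtV, hWte, hWtsub, hWtneq, hWtsep⟩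

/-- **Conformal minimal member with a prescribed coordinate.** -/
lemma A6 (hV : Fam E V) {Z : SignVec ℕ} (hZ : Z ∈ V) {e : ℕ} (hZe : Z e ≠ 0) :
    ∃ U, U ∈ V ∧ (∀ Y ∈ V, Y ≠ 0 → supp Y ⊆ supp U → supp Y = supp U) ∧
      (∀ d, U d = 0 ∨ U d = Z d) ∧ U e = Z e := by
  obtain ⟨U₀, ⟨hU₀V, hU₀sub, hU₀e⟩, hU₀sep⟩ := A6_stage1 hV hZ hZe
  have key := exists_good_of_descent
    (P := fun W => W ∈ V ∧ supp W ⊆ supp Z ∧ W e = Z e ∧ sep W Z = ∅)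
    (Good := fun W => ∀ Y ∈ V, Y ≠ 0 → supp Y ⊆ supp W → supp Y = supp W)
    (fun W => (supp W).ncard) ?_ U₀ ⟨hU₀V, hU₀sub, hU₀e, hU₀sep⟩
  · obtain ⟨U, ⟨hUV, hUsub, hUe, hUsep⟩, hUmin⟩ := key
    exact ⟨U, hUV, hUmin, conf_pointwise hUsub hUsep, hUe⟩
  rintro W ⟨hWV, hWsub, hWe, hWsep⟩
  by_cases hmin : ∀ Y ∈ V, Y ≠ 0 → supp Y ⊆ supp W → supp Y = supp W
  · exact Or.inl hmin
  right
  push_neg at hmin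
  obtain ⟨V₁, hV₁V, hV₁ne, hV₁sub, hV₁neq⟩ := hmin
  have hWe' : W e ≠ 0 := by rw [hWe]; exact hZe
  obtain ⟨Wt, ⟨hWtV, hWtne, hWtsub, hWtneq⟩, hWtsep⟩ :=
    A6_inner_conf hV hWV hV₁V hV₁ne hV₁sub hV₁neq
  obtain ⟨Zs, hZsV, hZse, hZssub, hZsneq, hZssep⟩ :=
    A6_improve hV hWV hWe' hWtV hWtne hWtsub hWtneq hWtsep
  refine ⟨Zs, ⟨hZsV, hZssub.trans hWsub, by rw [hZse, hWe], ?_⟩, ?_⟩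
  · rw [Set.eq_empty_iff_forall_notMem]
    rintro x ⟨hx1, hx2⟩
    rcases conf_pointwise hZssub hZssep x with h | h
    · exact hx2 h
    rcases conf_pointwise hWsub hWsep x with h' | h'
    · rw [h'] at h; exact hx2 h
    · rw [h, h'] at hx1 hx2
      exact hx2 (sign_eq_neg_self hx1)
  · exact Set.ncard_lt_ncard (ssubset_of_subset_of_ne hZssub hZsneq)
      (hV.fin.subset (hV.supp_sub W hWV))

end A6top

section Minors

variable {E : Set ℕ} {V : Set (SignVec ℕ)}

lemma supp_neg (X : SignVec ℕ) : supp (-X) = supp X := by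
  ext d
  simp only [mem_supp, neg_apply]
  rw [not_iff_not]
  exact sign_neg_eq_zero

lemma contrF_insert (V : Set (SignVec ℕ)) (a : ℕ) (A : Set ℕ) :
    contrF V (insert a A) = {W ∈ contrF V A | W a = 0} := by
  ext W
  constructor
  · rintro ⟨hW, h0⟩
    exact ⟨⟨hW, fun b hb => h0 b (Set.mem_insert_of_mem a hb)⟩, h0 a (Set.mem_insert a A)⟩
  · rintro ⟨⟨hW, h0⟩, ha⟩
    refine ⟨hW, fun b hb => ?_⟩
    rcases Set.mem_insert_iff.mp hb with rfl | hb
    · exact ha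
    · exact h0 b hb

/-- Iterated vector lifting across a finite contraction. -/
lemma VLchain (hV : Fam E V) :
    ∀ (A : Set ℕ), A.Finite → ∀ X : SignVec ℕ, supp X ⊆ E → (∀ a ∈ A, X a = 0) →
      (∀ W ∈ contrF V A, Orth X W) →
      ∃ Xh, Xh ∈ vect E V ∧ ∀ d, d ∉ A → Xh d = X d := by
  intro A hA
  refine Set.Finite.induction_on (motive := fun A _ => ∀ X : SignVec ℕ, supp X ⊆ E →
      (∀ a ∈ A, X a = 0) → (∀ W ∈ contrF V A, Orth X W) →
      ∃ Xh, Xh ∈ vect E V ∧ ∀ d, d ∉ A → Xh d = X d) A hA ?_ ?_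
  · intro X hsupp _ horth
    exact ⟨X, ⟨hsupp, fun W hW =>
      horth W ⟨hW, fun a ha => absurd ha (Set.notMem_empty a)⟩⟩, fun d _ => rfl⟩
  · intro a A haA hAfin IH
    intro X hsupp hzero horth
    have hVA : Fam (E \ A) (contrF V A) := contrFam hV A
    have hsupp' : supp X ⊆ E \ A := by
      intro d hd
      exact ⟨hsupp hd, fun hdA => (mem_supp.mp hd) (hzero d (Set.mem_insert_of_mem a hdA))⟩
    have hXa : X a = 0 := hzero a (Set.mem_insert a A)
    have horth' : ∀ W ∈ contrF V A, W a = 0 → Orth X W := by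
      intro W hW hWa
      apply horth
      rw [contrF_insert]
      exact ⟨hW, hWa⟩
    obtain ⟨σ, hσ⟩ := VL hVA hsupp' hXa horth'
    set X₁ := updSV X a σ with hX₁def
    have hX₁supp : supp X₁ ⊆ E := fun d hd => (hσ.1 hd).1
    have hX₁zero : ∀ b ∈ A, X₁ b = 0 := by
      intro b hb
      have hba : b ≠ a := fun h => haA (h ▸ hb)
      rw [hX₁def, updSV_ne _ _ hba]
      exact hzero b (Set.mem_insert_of_mem a hb)
    have hX₁orth : ∀ W ∈ contrF V A, Orth X₁ W := fun W hW => hσ.2 W hW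
    obtain ⟨Xh, hXh, hXheq⟩ := IH X₁ hX₁supp hX₁zero hX₁orth
    refine ⟨Xh, hXh, fun d hd => ?_⟩
    have hdA : d ∉ A := fun h => hd (Set.mem_insert_of_mem a h)
    have hda : d ≠ a := fun h => hd (h ▸ Set.mem_insert a A)
    rw [hXheq d hdA, hX₁def, updSV_ne _ _ hda]

/-- Deletion of one element from a family (restrictions). -/
def delF (V : Set (SignVec ℕ)) (f : ℕ) : Set (SignVec ℕ) := {Y | ∃ X ∈ V, Y = updSV X f 0}

lemma updSV_zero_zero (f : ℕ) : updSV (0 : SignVec ℕ) f 0 = 0 := by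
  funext d
  by_cases h : d = f
  · subst h; rw [updSV_self]; rfl
  · rw [updSV_ne _ _ h]

lemma delFam (hV : Fam E V) (f : ℕ) : Fam (E \ {f}) (delF V f) := by
  constructor
  · exact hV.fin.diff
  · rintro X ⟨X₀, hX₀, rfl⟩ d hd
    rw [mem_supp] at hd
    by_cases hdf : d = f
    · subst hdf; rw [updSV_self] at hd; exact absurd rfl hd
    · rw [updSV_ne _ _ hdf] at hd
      exact ⟨hV.supp_sub X₀ hX₀ (mem_supp.mpr hd), by simpa using hdf⟩
  · exact ⟨0, hV.zero, (updSV_zero_zero f).symm⟩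
  · rintro X ⟨X₀, hX₀, rfl⟩
    refine ⟨-X₀, hV.neg X₀ hX₀, ?_⟩
    symm
    funext d
    by_cases hdf : d = f
    · subst hdf; rw [updSV_self, neg_apply, updSV_self]; rfl
    · rw [updSV_ne _ _ hdf, neg_apply, neg_apply, updSV_ne _ _ hdf]
  · rintro X ⟨X₀, hX₀, rfl⟩ Y ⟨Y₀, hY₀, rfl⟩
    refine ⟨compose X₀ Y₀, hV.comp X₀ hX₀ Y₀ hY₀, ?_⟩
    symm
    funext d
    by_cases hdf : d = f
    · subst hdf
      rw [updSV_self, compose_right (by rw [updSV_self]), updSV_self]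
    · rw [updSV_ne _ _ hdf, compose_updSV_zero X₀ Y₀ f hdf]
  · rintro X ⟨X₀, hX₀, rfl⟩ Y ⟨Y₀, hY₀, rfl⟩ e he
    rw [sep_updSV_zero] at he
    obtain ⟨Z, hZ, hZe, hZ'⟩ := hV.elim X₀ hX₀ Y₀ hY₀ e he.1
    have hef : e ≠ f := he.2
    refine ⟨updSV Z f 0, ⟨Z, hZ, rfl⟩, by rw [updSV_ne _ _ hef]; exact hZe, ?_⟩
    intro e'' he''
    rw [sep_updSV_zero] at he''
    by_cases he''f : e'' = f
    · subst he''f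
      rw [updSV_self, compose_right (by rw [updSV_self]), updSV_self]
    · have : e'' ∉ sep X₀ Y₀ := fun h => he'' ⟨h, he''f⟩
      rw [updSV_ne _ _ he''f, hZ' e'' this, compose_updSV_zero X₀ Y₀ f he''f]

lemma vect_delF (hV : Fam E V) (f : ℕ) :
    vect (E \ {f}) (delF V f) = {X | X ∈ vect E V ∧ X f = 0} := by
  have sep_eq : ∀ (X Y₀ : SignVec ℕ), X f = 0 → sep X (updSV Y₀ f 0) = sep X Y₀ := by
    intro X Y₀ hXf
    ext d
    rcases eq_or_ne d f with rfl | hdf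
    · constructor
      · rintro ⟨_, h2⟩; exact absurd hXf h2
      · rintro ⟨_, h2⟩; exact absurd hXf h2
    · rw [mem_sep, mem_sep, updSV_ne _ _ hdf]
  have agr_eq : ∀ (X Y₀ : SignVec ℕ), X f = 0 → agr X (updSV Y₀ f 0) = agr X Y₀ := by
    intro X Y₀ hXf
    ext d
    rcases eq_or_ne d f with rfl | hdf
    · constructor
      · rintro ⟨_, h2⟩; exact absurd hXf h2
      · rintro ⟨_, h2⟩; exact absurd hXf h2
    · rw [mem_agr, mem_agr, updSV_ne _ _ hdf]
  ext X
  constructor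
  · rintro ⟨hsupp, horth⟩
    have hXf : X f = 0 := by
      by_contra h
      exact (hsupp (mem_supp.mpr h)).2 rfl
    refine ⟨⟨fun d hd => (hsupp hd).1, fun Y hY => ?_⟩, hXf⟩
    have := horth (updSV Y f 0) ⟨Y, hY, rfl⟩
    rw [orth_iff, sep_eq X Y hXf, agr_eq X Y hXf] at this
    rw [orth_iff]
    exact this
  · rintro ⟨⟨hsupp, horth⟩, hXf⟩
    refine ⟨fun d hd => ⟨hsupp hd, fun hdf => ?_⟩, ?_⟩
    · rw [Set.mem_singleton_iff] at hdf
      exact (mem_supp.mp hd) (hdf ▸ hXf)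
    · rintro Y ⟨Y₀, hY₀, rfl⟩
      have := horth Y₀ hY₀
      rw [orth_iff] at this
      rw [orth_iff, sep_eq X Y₀ hXf, agr_eq X Y₀ hXf]
      exact this

/-- Circuits of the one–element deletion. -/
lemma minIn_delF (hV : Fam E V) (f : ℕ) (U : SignVec ℕ) :
    minIn (vect (E \ {f}) (delF V f)) U ↔ (minIn (vect E V) U ∧ U f = 0) := by
  rw [show vect (E \ {f}) (delF V f) = {X | X ∈ vect E V ∧ X f = 0} from vect_delF hV f]
  constructor
  · rintro ⟨⟨hU, hUf⟩, hUne, hUmin⟩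
    refine ⟨⟨hU, hUne, fun Y hY hYne hYsub => ?_⟩, hUf⟩
    have hYf : Y f = 0 := by
      by_contra h
      exact (mem_supp.mp (hYsub (mem_supp.mpr h))) hUf
    exact hUmin Y ⟨hY, hYf⟩ hYne hYsub
  · rintro ⟨⟨hU, hUne, hUmin⟩, hUf⟩
    exact ⟨⟨hU, hUf⟩, hUne, fun Y hY hYne hYsub => hUmin Y hY.1 hYne hYsub⟩

end Minors

section Farkas

/-- Conformality to a global sign pattern. -/
def SubD (Θ X : SignVec ℕ) : Prop := ∀ d, X d = 0 ∨ X d = Θ d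

lemma sign_opp_of_ne {s t : SignType} (hs : s ≠ 0) (ht : t ≠ 0) (h : s ≠ t) : s = -t := by
  rcases sign_eq_or_opp hs ht with h' | h'
  · exact absurd h' h
  · exact h'

/-- **Farkas-type alternative** for covector families, relative to a global sign
pattern `Θ`: either some member conforms to `Θ` and is nonzero at `e`, or some
vector does. -/
lemma farkas : ∀ (k : ℕ) (E : Set ℕ) (V : Set (SignVec ℕ)) (Θ : SignVec ℕ), E.ncard ≤ k →
    Fam E V → (∀ d, Θ d ≠ 0) → ∀ e ∈ E,
    (∃ Y ∈ V, SubD Θ Y ∧ Y e = Θ e) ∨ (∃ X ∈ vect E V, SubD Θ X ∧ X e = Θ e) := by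
  intro k
  induction k with
  | zero =>
    intro E V Θ hcard hV hΘ e he
    exfalso
    have hE : E = ∅ := (Set.ncard_eq_zero hV.fin).mp (Nat.le_zero.mp hcard)
    rw [hE] at he
    exact he
  | succ k IH =>
    intro E V Θ hcard hV hΘ e he
    by_cases hf : ∃ f ∈ E, f ≠ e
    · obtain ⟨f, hfE, hfe⟩ := hf
      have hcard' : (E \ {f}).ncard ≤ k := by
        have := Set.ncard_diff_singleton_of_mem hfE
        omega
      have heE' : e ∈ E \ {f} := ⟨he, by simpa using (Ne.symm hfe)⟩
      -- contraction branch
      have hVc : Fam (E \ {f}) (contrF V {f}) := contrFam hV {f}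
      rcases IH (E \ {f}) (contrF V {f}) Θ hcard' hVc hΘ e heE' with ⟨Y, hY, hYsub, hYe⟩ | hR
      · exact Or.inl ⟨Y, hY.1, hYsub, hYe⟩
      obtain ⟨X', hX'v, hX'sub, hX'e⟩ := hR
      have hX'supp : supp X' ⊆ E := fun d hd => (hX'v.1 hd).1
      have hX'f : X' f = 0 := by
        by_contra h
        exact (hX'v.1 (mem_supp.mpr h)).2 rfl
      have horth' : ∀ W ∈ V, W f = 0 → Orth X' W := by
        intro W hW hWf
        exact hX'v.2 W ⟨hW, fun a ha => by rw [Set.mem_singleton_iff] at ha; rw [ha]; exact hWf⟩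
      obtain ⟨σ, hσ⟩ := VL hV hX'supp hX'f horth'
      have hXe'' : updSV X' f σ e = Θ e := by rw [updSV_ne _ _ (Ne.symm hfe)]; exact hX'e
      by_cases hσok : σ = 0 ∨ σ = Θ f
      · refine Or.inr ⟨updSV X' f σ, hσ, ?_, hXe''⟩
        intro d
        by_cases hdf : d = f
        · subst hdf; rw [updSV_self]; exact hσok
        · rw [updSV_ne _ _ hdf]; exact hX'sub d
      · push_neg at hσok
        have hσopp : σ = -(Θ f) := sign_opp_of_ne hσok.1 (hΘ f) hσok.2
        -- deletion branch
        have hVd : Fam (E \ {f}) (delF V f) := delFam hV f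
        rcases IH (E \ {f}) (delF V f) Θ hcard' hVd hΘ e heE' with hL | ⟨X₃, hX₃v, hX₃sub, hX₃e⟩
        · obtain ⟨Yd, ⟨Yh, hYh, rfl⟩, hYdsub, hYde⟩ := hL
          by_cases hYok : Yh f = 0 ∨ Yh f = Θ f
          · refine Or.inl ⟨Yh, hYh, ?_, ?_⟩
            · intro d
              by_cases hdf : d = f
              · subst hdf; exact hYok
              · have := hYdsub d
                rw [updSV_ne _ _ hdf] at this
                exact this
            · rw [updSV_ne _ _ (Ne.symm hfe)] at hYde
              exact hYde
          · push_neg at hYok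
            have hYopp : Yh f = -(Θ f) := sign_opp_of_ne hYok.1 (hΘ f) hYok.2
            -- the stall state: contradiction
            exfalso
            set X := updSV X' f σ with hXdef
            have hXY := hσ.2 Yh hYh
            rw [orth_iff] at hXY
            have hsepXY : sep X Yh = ∅ := by
              rw [Set.eq_empty_iff_forall_notMem]
              rintro d ⟨hd1, hd2⟩
              by_cases hdf : d = f
              · rw [hdf, hXdef, updSV_self, hσopp, hYopp, neg_neg] at hd1
                exact hΘ f (sign_eq_neg_self hd1.symm)
              · rw [hXdef, updSV_ne _ _ hdf] at hd1 hd2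
                rcases hX'sub d with h | h
                · exact hd2 h
                rw [h] at hd1 hd2
                have hYd0 : Yh d ≠ 0 := by
                  intro hc; rw [hc] at hd1; simp at hd1; exact hd2 hd1
                have hYdd := hYdsub d
                rw [updSV_ne _ _ hdf] at hYdd
                rcases hYdd with h' | h'
                · exact hYd0 h'
                · rw [h'] at hd1
                  exact hd2 (sign_eq_neg_self hd1)
            have hagrXY : e ∈ agr X Yh := by
              refine ⟨?_, ?_⟩
              · rw [hXdef, updSV_ne _ _ (Ne.symm hfe), hX'e]
                rw [updSV_ne _ _ (Ne.symm hfe)] at hYde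
                rw [hYde]
              · rw [hXdef, updSV_ne _ _ (Ne.symm hfe), hX'e]
                exact hΘ e
            rw [hsepXY] at hXY
            obtain ⟨d, hd⟩ := hXY.2 ⟨e, hagrXY⟩
            exact hd
        · -- vector branch from deletion
          rw [vect_delF hV f] at hX₃v
          exact Or.inr ⟨X₃, hX₃v.1, hX₃sub, hX₃e⟩
    · -- E = {e}
      push_neg at hf
      by_cases hv : ∃ V₀ ∈ V, V₀ e ≠ 0
      · obtain ⟨V₀, hV₀, hV₀e⟩ := hv
        have hsupp : ∀ d, d ≠ e → V₀ d = 0 := by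
          intro d hd
          by_contra h
          exact hd (hf d (hV.supp_sub V₀ hV₀ (mem_supp.mpr h)))
        rcases sign_eq_or_opp hV₀e (hΘ e) with h | h
        · refine Or.inl ⟨V₀, hV₀, ?_, h⟩
          intro d
          by_cases hde : d = e
          · subst hde; exact Or.inr h
          · exact Or.inl (hsupp d hde)
        · refine Or.inl ⟨-V₀, hV.neg V₀ hV₀, ?_, ?_⟩
          · intro d
            by_cases hde : d = e
            · subst hde
              right
              rw [neg_apply, h, neg_neg]
            · left
              rw [neg_apply, hsupp d hde]; rfl
          · rw [neg_apply, h, neg_neg]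
      · push_neg at hv
        refine Or.inr ⟨updSV 0 e (Θ e), ⟨?_, ?_⟩, ?_, updSV_self _ _ _⟩
        · intro d hd
          rw [mem_supp] at hd
          by_cases hde : d = e
          · subst hde; exact he
          · rw [updSV_ne _ _ hde] at hd; exact absurd rfl hd
        · intro W hW
          have hWe : W e = 0 := hv W hW
          rw [orth_iff]
          have h1 : sep (updSV 0 e (Θ e)) W = ∅ := by
            rw [Set.eq_empty_iff_forall_notMem]
            rintro d ⟨hd1, hd2⟩
            by_cases hde : d = e
            · rw [hde, updSV_self, hWe] at hd1
              simp at hd1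
              exact hΘ e hd1
            · rw [updSV_ne _ _ hde] at hd2; exact hd2 rfl
          have h2 : agr (updSV 0 e (Θ e)) W = ∅ := by
            rw [Set.eq_empty_iff_forall_notMem]
            rintro d ⟨hd1, hd2⟩
            by_cases hde : d = e
            · rw [hde, updSV_self, hWe] at hd1
              exact hΘ e hd1
            · rw [updSV_ne _ _ hde] at hd2; exact hd2 rfl
          rw [h1, h2]
        · intro d
          by_cases hde : d = e
          · subst hde; rw [updSV_self]; exact Or.inr rfl
          · rw [updSV_ne _ _ hde]; exact Or.inl rfl

end Farkas

section Crux

variable {E : Set ℕ} {V : Set (SignVec ℕ)}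

/-- **Phase-I feasibility**: if no circuit through `f` gives a Farkas
obstruction relative to `S₀`, then there is a member conforming to `Θ`,
supported in `S₀ ∪ {f}` and agreeing with `Θ` at `f`. -/
lemma crux (hV : Fam E V) (Θ : SignVec ℕ) (hΘ : ∀ d, Θ d ≠ 0)
    {S₀ : Set ℕ} {f : ℕ} (hS₀ : S₀ ⊆ E) (hfE : f ∈ E) (hfS₀ : f ∉ S₀)
    (hH : ∀ U, minIn (vect E V) U → U f = Θ f → ∃ d ∈ S₀, U d = -(Θ d)) :
    ∃ Z ∈ V, SubD Θ Z ∧ supp Z ⊆ S₀ ∪ {f} ∧ Z f = Θ f := by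
  set T : Set ℕ := S₀ ∪ {f} with hTdef
  have hTE : T ⊆ E := Set.union_subset hS₀ (Set.singleton_subset_iff.mpr hfE)
  have hfT : f ∈ T := Set.mem_union_right _ rfl
  have hEA : E \ (E \ T) = T := Set.diff_diff_cancel_left hTE
  have hfamT : Fam T (contrF V (E \ T)) := by
    have := contrFam hV (E \ T)
    rwa [hEA] at this
  rcases farkas T.ncard T (contrF V (E \ T)) Θ le_rfl hfamT hΘ f hfT with
    ⟨Z, hZ, hZsub, hZf⟩ | ⟨X, hXv, hXsub, hXf⟩
  · exact ⟨Z, hZ.1, hZsub, hfamT.supp_sub Z hZ, hZf⟩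
  · exfalso
    have hXsupp : supp X ⊆ E := fun d hd => hTE (hXv.1 hd)
    have hXzero : ∀ a ∈ E \ T, X a = 0 := by
      intro a ha
      by_contra h
      exact ha.2 (hXv.1 (mem_supp.mpr h))
    obtain ⟨Xh, hXh, hXheq⟩ := VLchain hV (E \ T) hV.fin.diff X hXsupp hXzero hXv.2
    have hfA : f ∉ E \ T := fun h => h.2 hfT
    have hXhf : Xh f = Θ f := by rw [hXheq f hfA]; exact hXf
    have hXhf' : Xh f ≠ 0 := by rw [hXhf]; exact hΘ f
    obtain ⟨U, hUv, hUmin, hUconf, hUf⟩ := A6 (WFam hV) hXh hXhf'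
    have hUne : U ≠ 0 := by
      intro h
      rw [h] at hUf
      exact hΘ f (by rw [← hXhf, ← hUf]; rfl)
    obtain ⟨d, hdS₀, hUd⟩ := hH U ⟨hUv, hUne, hUmin⟩ (by rw [hUf, hXhf])
    have hUd0 : U d ≠ 0 := by
      rw [hUd]
      simpa [sign_neg_eq_zero] using hΘ d
    have hUdXh : U d = Xh d := (hUconf d).resolve_left hUd0
    have hdA : d ∉ E \ T := fun h => h.2 (Set.mem_union_left _ hdS₀)
    have hUdX : U d = X d := by rw [hUdXh, hXheq d hdA]
    rcases hXsub d with h | h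
    · rw [hUdX, h] at hUd0; exact hUd0 rfl
    · rw [hUdX, h] at hUd
      exact hΘ d (sign_eq_neg_self hUd)

/-- Lift lemma for a nonzero target sign. -/
lemma lift_ne_zero (hV : Fam E V) {f : ℕ} (hfE : f ∈ E) {Yh : SignVec ℕ} (hYh : Yh ∈ V)
    {s : SignType} (hs : s ≠ 0)
    (hHs : ∀ U, minIn (vect E V) U → U f ≠ 0 → Orth U (updSV Yh f s)) :
    ∃ Z ∈ V, (∀ d, d ≠ f → Z d = Yh d) ∧ Z f = s := by
  classical
  set S₀ : Set ℕ := supp Yh \ {f} with hS₀def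
  set Θ : SignVec ℕ := fun d => if d = f then s else if Yh d ≠ 0 then Yh d else 1 with hΘdef
  have hΘf : Θ f = s := by simp [hΘdef]
  have hΘS₀ : ∀ d ∈ S₀, Θ d = Yh d := by
    rintro d ⟨hd1, hd2⟩
    rw [Set.mem_singleton_iff] at hd2
    have hYd : Yh d ≠ 0 := mem_supp.mp hd1
    simp only [hΘdef, if_neg hd2, if_pos hYd]
  have hΘ : ∀ d, Θ d ≠ 0 := by
    intro d
    simp only [hΘdef]
    by_cases hdf : d = f
    · simp only [hdf, if_pos rfl]
      exact hs
    · simp only [if_neg hdf]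
      by_cases hY0 : Yh d = 0
      · rw [if_neg (by simp [hY0])]
        decide
      · rw [if_pos hY0]
        exact hY0
  have hS₀E : S₀ ⊆ E := fun d hd => hV.supp_sub Yh hYh hd.1
  have hfS₀ : f ∉ S₀ := fun h => h.2 rfl
  have hH : ∀ U, minIn (vect E V) U → U f = Θ f → ∃ d ∈ S₀, U d = -(Θ d) := by
    intro U hU hUf
    have hUf' : U f ≠ 0 := by rw [hUf]; exact hΘ f
    have horth := hHs U hU hUf'
    rw [orth_iff] at horth
    have hagr : (agr U (updSV Yh f s)).Nonempty := by
      refine ⟨f, ?_, hUf'⟩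
      rw [updSV_self, hUf, hΘf]
    obtain ⟨d, hd1, hd2⟩ := horth.mpr hagr
    have hdf : d ≠ f := by
      intro h
      rw [h, updSV_self] at hd1
      rw [hUf, hΘf] at hd1
      exact hs (sign_eq_neg_self hd1)
    rw [updSV_ne _ _ hdf] at hd1
    have hYd : Yh d ≠ 0 := by
      intro h
      rw [h] at hd1; simp at hd1
      exact hd2 hd1
    have hdS₀ : d ∈ S₀ := ⟨mem_supp.mpr hYd, by simpa using hdf⟩
    exact ⟨d, hdS₀, by rw [hΘS₀ d hdS₀]; exact hd1⟩
  obtain ⟨Z₀, hZ₀V, hZ₀sub, hZ₀supp, hZ₀f⟩ := crux hV Θ hΘ hS₀E hfE hfS₀ hH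
  refine ⟨compose Z₀ Yh, hV.comp Z₀ hZ₀V Yh hYh, ?_, ?_⟩
  · intro d hdf
    by_cases h0 : Z₀ d = 0
    · rw [compose_right h0]
    · rw [compose_left h0]
      have hdT : d ∈ S₀ ∪ {f} := hZ₀supp (mem_supp.mpr h0)
      have hdS₀ : d ∈ S₀ := by
        rcases hdT with h | h
        · exact h
        · exact absurd h (by simpa using hdf)
      rw [(hZ₀sub d).resolve_left h0, hΘS₀ d hdS₀]
  · rw [compose_left (by rw [hZ₀f, hΘf]; exact hs), hZ₀f, hΘf]

lemma updSV_eq_self (X : SignVec ℕ) (f : ℕ) : updSV X f (X f) = X := by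
  funext d
  by_cases hdf : d = f
  · subst hdf; rw [updSV_self]
  · rw [updSV_ne _ _ hdf]

/-- **The lifting lemma**: any sign allowed by all circuits through `f` is
realized by a member agreeing with `Yh` away from `f`. -/
lemma lift_lemma (hV : Fam E V) {f : ℕ} (hfE : f ∈ E) {Yh : SignVec ℕ} (hYh : Yh ∈ V)
    (s : SignType)
    (hHs : ∀ U, minIn (vect E V) U → U f ≠ 0 → Orth U (updSV Yh f s)) :
    ∃ Z ∈ V, (∀ d, d ≠ f → Z d = Yh d) ∧ Z f = s := by
  by_cases hsY : s = Yh f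
  · exact ⟨Yh, hYh, fun d _ => rfl, hsY.symm⟩
  by_cases hs : s ≠ 0
  · exact lift_ne_zero hV hfE hYh hs hHs
  push_neg at hs
  subst hs
  have hYf : Yh f ≠ 0 := fun h => hsY h.symm
  -- target sign: -(Yh f)
  have htne : -(Yh f) ≠ 0 := by simpa [sign_neg_eq_zero] using hYf
  have hHt : ∀ U, minIn (vect E V) U → U f ≠ 0 → Orth U (updSV Yh f (-(Yh f))) := by
    intro U hU hUf
    have hO1 := hHs U hU hUf
    have hO2 : Orth U Yh := hU.1.2 Yh hYh
    -- characterize the seps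
    have hkey : ∀ σ : SignType,
        (sep U (updSV Yh f σ)).Nonempty ↔ ((∃ d, d ≠ f ∧ d ∈ sep U Yh) ∨ U f = -σ) := by
      intro σ
      constructor
      · rintro ⟨d, hd1, hd2⟩
        by_cases hdf : d = f
        · rw [hdf, updSV_self] at hd1
          rw [hdf] at hd2
          right; exact hd1
        · rw [updSV_ne _ _ hdf] at hd1
          exact Or.inl ⟨d, hdf, hd1, hd2⟩
      · rintro (⟨d, hdf, hd1, hd2⟩ | h)
        · exact ⟨d, by rw [updSV_ne _ _ hdf]; exact hd1, hd2⟩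
        · exact ⟨f, by rw [updSV_self]; exact h, hUf⟩
    have hkey' : ∀ σ : SignType,
        (agr U (updSV Yh f σ)).Nonempty ↔ ((∃ d, d ≠ f ∧ d ∈ agr U Yh) ∨ U f = σ) := by
      intro σ
      constructor
      · rintro ⟨d, hd1, hd2⟩
        by_cases hdf : d = f
        · rw [hdf, updSV_self] at hd1
          rw [hdf] at hd2
          right; exact hd1
        · rw [updSV_ne _ _ hdf] at hd1
          exact Or.inl ⟨d, hdf, hd1, hd2⟩
      · rintro (⟨d, hdf, hd1, hd2⟩ | h)
        · exact ⟨d, by rw [updSV_ne _ _ hdf]; exact hd1, hd2⟩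
        · exact ⟨f, by rw [updSV_self]; exact h, hUf⟩
    rw [orth_iff, hkey 0, hkey' 0] at hO1
    have hO2' : Orth U (updSV Yh f (Yh f)) := by rw [updSV_eq_self]; exact hO2
    rw [orth_iff, hkey (Yh f), hkey' (Yh f)] at hO2'
    rw [orth_iff, hkey (-(Yh f)), hkey' (-(Yh f))]
    have hsS : ∃ d, d ≠ f ∧ d ∈ sep U Yh := by
      by_contra hnS
      have hnA : ¬∃ d, d ≠ f ∧ d ∈ agr U Yh := by
        intro hA
        have := hO1.mpr (Or.inl (by
          obtain ⟨d, hd⟩ := hA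
          exact ⟨d, hd⟩))
        rcases this with h | h
        · exact hnS h
        · simp at h; exact hUf h
      -- then from hO2' we get U f = ± Yh f both impossible
      rcases sign_eq_or_opp hUf hYf with h | h
      · rcases hO2'.mpr (Or.inr h) with h' | h'
        · exact hnS h'
        · exact hYf (sign_eq_neg_self (h.symm.trans h'))
      · rcases hO2'.mp (Or.inr h) with h' | h'
        · exact hnA h'
        · exact hYf (sign_eq_neg_self (h'.symm.trans h))
    have hsA : ∃ d, d ≠ f ∧ d ∈ agr U Yh := by
      by_contra hnA
      rcases hO1.mp (Or.inl hsS) with h | h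
      · exact hnA h
      · exact hUf h
    constructor
    · intro _; exact Or.inl hsA
    · intro _; exact Or.inl hsS
  obtain ⟨Zm, hZmV, hZmeq, hZmf⟩ := lift_ne_zero hV hfE hYh htne hHt
  -- eliminate f between Yh and Zm
  have hfsep : f ∈ sep Yh Zm := ⟨by rw [hZmf, neg_neg], hYf⟩
  obtain ⟨Z, hZV, hZf, hZ⟩ := hV.elim Yh hYh Zm hZmV f hfsep
  refine ⟨Z, hZV, ?_, hZf⟩
  intro d hdf
  have hdsep : d ∉ sep Yh Zm := by
    rintro ⟨h1, h2⟩
    rw [hZmeq d hdf] at h1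
    exact h2 (sign_eq_neg_self h1)
  rw [hZ d hdsep]
  rcases compose_mem_cases (X := Yh) (Y := Zm) d with hc | ⟨hc0, hc⟩
  · exact hc
  · rw [hc, hZmeq d hdf]

end Crux

section Core

lemma eq_zero_of_supp_empty {X : SignVec ℕ} (h : supp X ⊆ ∅) : X = 0 := by
  by_contra hne
  obtain ⟨d, hd⟩ := ne_zero_iff_supp.mp hne
  exact h hd

/-- **Families with the same circuits coincide.** -/
lemma core_subset : ∀ (k : ℕ) (E : Set ℕ) (V₁ V₂ : Set (SignVec ℕ)), E.ncard ≤ k →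
    Fam E V₁ → Fam E V₂ →
    (∀ U, minIn (vect E V₁) U ↔ minIn (vect E V₂) U) → V₁ ⊆ V₂ := by
  intro k
  induction k with
  | zero =>
    intro E V₁ V₂ hcard h1 h2 _ X hX
    have hE : E = ∅ := (Set.ncard_eq_zero h1.fin).mp (Nat.le_zero.mp hcard)
    have hX0 : X = 0 := eq_zero_of_supp_empty (hE ▸ h1.supp_sub X hX)
    rw [hX0]; exact h2.zero
  | succ k IH =>
    intro E V₁ V₂ hcard h1 h2 hmin X hX
    by_cases hE : E = ∅
    · have hX0 : X = 0 := eq_zero_of_supp_empty (hE ▸ h1.supp_sub X hX)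
      rw [hX0]; exact h2.zero
    · obtain ⟨f, hfE⟩ := Set.nonempty_iff_ne_empty.mpr hE
      have hcard' : (E \ {f}).ncard ≤ k := by
        have := Set.ncard_diff_singleton_of_mem hfE
        omega
      have hD1 : Fam (E \ {f}) (delF V₁ f) := delFam h1 f
      have hD2 : Fam (E \ {f}) (delF V₂ f) := delFam h2 f
      have hminD : ∀ U, minIn (vect (E \ {f}) (delF V₁ f)) U ↔
          minIn (vect (E \ {f}) (delF V₂ f)) U := by
        intro U
        rw [minIn_delF h1 f, minIn_delF h2 f, hmin U]
      have hsub : delF V₁ f ⊆ delF V₂ f := IH (E \ {f}) _ _ hcard' hD1 hD2 hminD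
      have hXD : updSV X f 0 ∈ delF V₂ f := hsub ⟨X, hX, rfl⟩
      obtain ⟨Yh, hYh, hYheq⟩ := hXD
      have hagree : ∀ d, d ≠ f → Yh d = X d := by
        intro d hdf
        have := congrFun hYheq d
        rw [updSV_ne _ _ hdf, updSV_ne _ _ hdf] at this
        exact this.symm
      have hupdX : updSV Yh f (X f) = X := by
        funext d
        by_cases hdf : d = f
        · rw [hdf, updSV_self]
        · rw [updSV_ne _ _ hdf, hagree d hdf]
      have hHs : ∀ U, minIn (vect E V₂) U → U f ≠ 0 → Orth U (updSV Yh f (X f)) := by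
        intro U hU _
        rw [hupdX]
        have hU1 : U ∈ vect E V₁ := ((hmin U).mpr hU).1
        exact hU1.2 X hX
      obtain ⟨Z, hZ, hZeq, hZf⟩ := lift_lemma h2 hfE hYh (X f) hHs
      have hZX : Z = X := by
        funext d
        by_cases hdf : d = f
        · rw [hdf]; exact hZf
        · rw [hZeq d hdf, hagree d hdf]
      rw [← hZX]; exact hZ

lemma core_eq {E : Set ℕ} {V₁ V₂ : Set (SignVec ℕ)} (h1 : Fam E V₁) (h2 : Fam E V₂)
    (hmin : ∀ U, minIn (vect E V₁) U ↔ minIn (vect E V₂) U) : V₁ = V₂ :=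
  Set.Subset.antisymm (core_subset E.ncard E V₁ V₂ le_rfl h1 h2 hmin)
    (core_subset E.ncard E V₂ V₁ le_rfl h2 h1 (fun U => (hmin U).symm))

end Core

section Assembly

lemma nonneg_compose {X Y : SignVec ℕ} (hX : Nonneg X) (hY : Nonneg Y) :
    Nonneg (compose X Y) := by
  intro e
  rcases compose_mem_cases (X := X) (Y := Y) e with hc | ⟨_, hc⟩
  · rw [hc]; exact hX e
  · rw [hc]; exact hY e

lemma nonneg_zero : Nonneg (0 : SignVec ℕ) := fun _ => Or.inr rfl

/-- The all-positive covector of `M ∖ f` built from condition (ii). -/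
lemma exists_P (M Mf : OrientedMatroid ℕ) (n r : ℕ) (hProg : IsProgram M Mf n r)
    (hn : 0 < n) :
    ∃ P ∈ Mf.covectors, Nonneg P ∧ (∀ e, e < n → P e = 1) ∧ P (n + 1) = 1 := by
  obtain ⟨-, -, -, hi, hii, -⟩ := hProg
  have key : ∀ k, k ≤ n → ∃ P ∈ Mf.covectors, Nonneg P ∧ (∀ e, e < k → P e = 1) ∧
      P (n + 1) = 1 := by
    intro k
    induction k with
    | zero =>
      intro _
      obtain ⟨Y, hYc, hYnn, _⟩ := hii 0 hn
      refine ⟨Y, hYc.1, hYnn, fun e he => absurd he (Nat.not_lt_zero e), ?_⟩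
      rcases hYnn (n + 1) with h | h
      · exact h
      · exact absurd h (hi Y hYc hYnn)
    | succ k IH =>
      intro hk
      obtain ⟨P, hPc, hPnn, hPlt, hP1⟩ := IH (Nat.le_of_succ_le hk)
      obtain ⟨Y, hYc, hYnn, hYk⟩ := hii k hk
      refine ⟨compose P Y, Mf.compose_mem P hPc Y hYc.1, nonneg_compose hPnn hYnn, ?_, ?_⟩
      · intro e he
        rcases Nat.lt_succ_iff_lt_or_eq.mp he with he' | rfl
        · rw [compose_left (by rw [hPlt e he']; decide)]
          exact hPlt e he'
        · rcases hPnn e with h | h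
          · rw [compose_left (by rw [h]; decide)]; exact h
          · rw [compose_right h]; exact hYk
      · rw [compose_left (by rw [hP1]; decide)]
        exact hP1
  exact key n le_rfl

lemma supp_updSV_zero (Y : SignVec ℕ) (f : ℕ) : supp (updSV Y f 0) = supp Y \ {f} := by
  ext x
  rcases eq_or_ne x f with rfl | hxf
  · simp only [mem_supp, updSV_self, Set.mem_diff, Set.mem_singleton_iff]
    simp
  · simp only [mem_supp, updSV_ne _ _ hxf, Set.mem_diff, Set.mem_singleton_iff, hxf,
      not_false_iff, and_true]

end Assembly

lemma sign_trichotomy (s : SignType) : s = 0 ∨ s = 1 ∨ s = -1 := by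
  cases s
  · exact Or.inl rfl
  · exact Or.inr (Or.inr rfl)
  · exact Or.inr (Or.inl rfl)

/-- For an oriented matroid program `M` of rank `r` on
`[n] ∪ {f, g}` (with `Mf = M ∖ f` and `Mfg = M ∖ {f, g}`), the collection of
faces `{[n] ∖ supp Y : Y a nonnegative covector of M ∖ f}` coincides with
`{[n] ∖ supp Y' : Y' a nonnegative covector of M ∖ {f, g}}`; in particular it
is determined by `M ∖ {f, g}` alone. -/
theorem faces_determined_by_del_fg (M Mf Mfg : OrientedMatroid ℕ) (n r : ℕ)
    (hProg : IsProgram M Mf n r)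
    (hMfg : IsDeletion M {n, n + 1} Mfg) :
    {F | ∃ Y ∈ Mf.covectors, Nonneg Y ∧ F = nset n \ supp Y} =
      {F | ∃ Y ∈ Mfg.covectors, Nonneg Y ∧ F = nset n \ supp Y} := by
  have hMg := hProg.1
  have hDel := hProg.2.2.1
  have hi := hProg.2.2.2.1
  have hii := hProg.2.2.2.2.1
  have hMfground : Mf.ground = nset n ∪ {n + 1} := by
    rw [hDel.1, hMg]
    ext x
    simp only [Set.mem_diff, Set.mem_union, Set.mem_insert_iff, Set.mem_singleton_iff, nset,
      Set.mem_setOf_eq]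
    omega
  have hMfgground : Mfg.ground = nset n := by
    rw [hMfg.1, hMg]
    ext x
    simp only [Set.mem_diff, Set.mem_union, Set.mem_insert_iff, Set.mem_singleton_iff, nset,
      Set.mem_setOf_eq]
    omega
  have famMf : Fam (nset n ∪ {n + 1}) Mf.covectors := hMfground ▸ famOf Mf
  have famMfg : Fam (nset n) Mfg.covectors := hMfgground ▸ famOf Mfg
  have c1 : ∀ X, Mf.IsCircuit X ↔ M.IsCircuit X ∧ X n = 0 := by
    intro X
    rw [hDel.2 X]
    constructor
    · rintro ⟨h1, h2⟩; exact ⟨h1, h2 n rfl⟩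
    · rintro ⟨h1, h2⟩
      refine ⟨h1, fun e he => ?_⟩
      rw [Set.mem_singleton_iff] at he
      exact he ▸ h2
  have c2 : ∀ X, Mfg.IsCircuit X ↔ M.IsCircuit X ∧ X n = 0 ∧ X (n + 1) = 0 := by
    intro X
    rw [hMfg.2 X]
    constructor
    · rintro ⟨h1, h2⟩
      exact ⟨h1, h2 n (Set.mem_insert n _), h2 (n + 1) (Set.mem_insert_of_mem n rfl)⟩
    · rintro ⟨h1, h2, h3⟩
      refine ⟨h1, fun e he => ?_⟩
      rcases Set.mem_insert_iff.mp he with rfl | he'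
      · exact h2
      · rw [Set.mem_singleton_iff] at he'
        exact he' ▸ h3
  have c3 : ∀ X, Mfg.IsCircuit X ↔ Mf.IsCircuit X ∧ X (n + 1) = 0 := by
    intro X
    rw [c2 X, c1 X]
    tauto
  have hgd : (nset n ∪ ({n + 1} : Set ℕ)) \ {n + 1} = nset n := by
    ext x
    simp only [Set.mem_diff, Set.mem_union, Set.mem_singleton_iff, nset, Set.mem_setOf_eq]
    omega
  have famD : Fam (nset n) (delF Mf.covectors (n + 1)) := hgd ▸ delFam famMf (n + 1)
  have hcircMf : ∀ X, Mf.IsCircuit X ↔ minIn (vect (nset n ∪ {n + 1}) Mf.covectors) X := by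
    intro X
    have h := isCircuit_iff Mf X
    rwa [hMfground] at h
  have hcircMfg : ∀ X, Mfg.IsCircuit X ↔ minIn (vect (nset n) Mfg.covectors) X := by
    intro X
    have h := isCircuit_iff Mfg X
    rwa [hMfgground] at h
  have hminD : ∀ U, minIn (vect (nset n) (delF Mf.covectors (n + 1))) U ↔
      minIn (vect (nset n) Mfg.covectors) U := by
    intro U
    have h := minIn_delF famMf (n + 1) U
    rw [hgd] at h
    rw [h, ← hcircMf U, ← hcircMfg U]
    exact (c3 U).symm
  have hDeq : delF Mf.covectors (n + 1) = Mfg.covectors := core_eq famD famMfg hminD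
  have hNZ : ∀ Z ∈ Mf.covectors, Nonneg Z → Z ≠ 0 → Z (n + 1) = 1 := by
    intro Z hZ hZnn hZne
    obtain ⟨e₀, he₀⟩ := ne_zero_iff_supp.mp hZne
    obtain ⟨U, hUV, hUmin, hUconf, hUe⟩ := A6 famMf hZ (mem_supp.mp he₀)
    have hUne : U ≠ 0 := by
      intro h
      rw [h] at hUe
      exact (mem_supp.mp he₀) hUe.symm
    have hUnn : Nonneg U := by
      intro d
      rcases hUconf d with h | h
      · exact Or.inr h
      · rw [h]; exact hZnn d
    have hU1 := hi U ⟨hUV, hUne, hUmin⟩ hUnn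
    rcases hUconf (n + 1) with h | h
    · exact absurd h hU1
    · rcases hZnn (n + 1) with h' | h'
      · exact h'
      · rw [h'] at h
        exact absurd h hU1
  ext F
  simp only [Set.mem_setOf_eq]
  constructor
  · rintro ⟨Y, hY, hYnn, rfl⟩
    refine ⟨updSV Y (n + 1) 0, ?_, ?_, ?_⟩
    · rw [← hDeq]
      exact ⟨Y, hY, rfl⟩
    · intro d
      rcases eq_or_ne d (n + 1) with rfl | hd
      · rw [updSV_self]; exact Or.inr rfl
      · rw [updSV_ne _ _ hd]; exact hYnn d
    · rw [supp_updSV_zero]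
      ext x
      simp only [Set.mem_diff, nset, Set.mem_setOf_eq, Set.mem_singleton_iff]
      constructor
      · rintro ⟨hx, hxs⟩
        exact ⟨hx, fun hc => hxs hc.1⟩
      · rintro ⟨hx, hxs⟩
        exact ⟨hx, fun hc => hxs ⟨hc, by omega⟩⟩
  · rintro ⟨Y', hY', hY'nn, rfl⟩
    rw [← hDeq] at hY'
    obtain ⟨Yh, hYh, hYheq⟩ := hY'
    have hagree : ∀ d, d ≠ n + 1 → Y' d = Yh d := by
      intro d hd
      rw [hYheq, updSV_ne _ _ hd]
    have hFeq : nset n \ supp Y' = nset n \ supp Yh := by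
      ext x
      simp only [Set.mem_diff, nset, Set.mem_setOf_eq]
      constructor
      · rintro ⟨hx, hxs⟩
        refine ⟨hx, fun hc => hxs ?_⟩
        rw [mem_supp] at hc ⊢
        rw [hagree x (by omega)]
        exact hc
      · rintro ⟨hx, hxs⟩
        refine ⟨hx, fun hc => hxs ?_⟩
        rw [mem_supp] at hc ⊢
        rw [← hagree x (by omega)]
        exact hc
    rcases sign_trichotomy (Yh (n + 1)) with hσ | hσ | hσ
    · refine ⟨Yh, hYh, ?_, hFeq⟩
      intro d
      rcases eq_or_ne d (n + 1) with rfl | hd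
      · exact Or.inr hσ
      · rw [← hagree d hd]; exact hY'nn d
    · refine ⟨Yh, hYh, ?_, hFeq⟩
      intro d
      rcases eq_or_ne d (n + 1) with rfl | hd
      · exact Or.inl hσ
      · rw [← hagree d hd]; exact hY'nn d
    · -- the lift has value −1 at g : either n = 0 (trivial) or contradiction with (i)
      by_cases hn : n = 0
      · subst hn
        refine ⟨0, Mf.zero_mem, nonneg_zero, ?_⟩
        have h0 : nset 0 = (∅ : Set ℕ) := by
          ext x; simp [nset]
        rw [h0, Set.empty_diff, Set.empty_diff]
      · exfalso
        have hn' : 0 < n := Nat.pos_of_ne_zero hn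
        obtain ⟨P, hPc, hPnn, hPlt, hP1⟩ := exists_P M Mf n r hProg hn'
        have hsep : sep Yh P = {n + 1} := by
          ext d
          constructor
          · rintro ⟨h1, h2⟩
            rw [Set.mem_singleton_iff]
            by_contra hd
            have hYd : Yh d = 1 ∨ Yh d = 0 := by
              rw [← hagree d hd]; exact hY'nn d
            rcases hYd with h | h
            · rcases hPnn d with h' | h'
              · rw [h, h'] at h1; exact absurd h1 (by decide)
              · rw [h, h'] at h1; exact absurd h1 (by decide)
            · exact h2 h
          · intro hd
            rw [Set.mem_singleton_iff] at hd
            subst hd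
            exact ⟨by rw [hσ, hP1], by rw [hσ]; decide⟩
        obtain ⟨Z, hZc, hZ1, hZ⟩ := Mf.elim Yh hYh P hPc (n + 1) (by rw [hsep]; rfl)
        have hZnn : Nonneg Z := by
          intro d
          rcases eq_or_ne d (n + 1) with rfl | hd
          · exact Or.inr hZ1
          · have hdsep : d ∉ sep Yh P := by
              rw [hsep]; exact hd
            rw [hZ d hdsep]
            rcases compose_mem_cases (X := Yh) (Y := P) d with hc | ⟨_, hc⟩
            · rw [hc, ← hagree d hd]; exact hY'nn d
            · rw [hc]; exact hPnn d
        have hZne : Z ≠ 0 := by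
          intro h
          have h0 : Z 0 = 0 := by rw [h]; rfl
          have h0sep : (0 : ℕ) ∉ sep Yh P := by
            rw [hsep]
            simp only [Set.mem_singleton_iff]
            omega
          by_cases hY0 : Yh 0 = 0
          · rw [hZ 0 h0sep, compose_right hY0] at h0
            rw [hPlt 0 hn'] at h0
            exact absurd h0 (by decide)
          · rw [hZ 0 h0sep, compose_left hY0] at h0
            exact hY0 h0
        have hfin := hNZ Z hZc hZnn hZne
        rw [hZ1] at hfin
        exact absurd hfin (by decide)

end OMHK
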